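/- arXiv:1106.0051 — 3 statements merged into one kernel-verified Lean document; each statement's English description precedes it below -/
import Mathlib

section
/- (Expanding return words.) Assume (F0), (F1) and (F01). Then there exists b₀∈(0,1) such that for every b∈(0,b₀] and every nondegenerate closed interval J ⊆ [f₀⁻¹(f₀⁻¹(b)), b] there exist a finite word w over {0,1} and a point q*∈J such that: f_[w](q*) = q*; (f_[w])'(q*) > 1; q* is the unique fixed point of f_[w] in J; and for every ε>0 one has ⋃_{n≥0} (f_[w])ⁿ([q*−ε, q*+ε] ∩ [0,1]) ⊇ [f₀⁻¹(f₀⁻¹(b)), b]. -/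
open Set Filter MeasureTheory

noncomputable section

/-- Condition (F0) on the fiber map `f₀`. -/
def F0cond (f₀ : ℝ → ℝ) (β₀ lam₀ : ℝ) : Prop :=
  ContDiff ℝ 1 f₀ ∧ Set.MapsTo f₀ (Set.Icc 0 1) (Set.Icc 0 1) ∧
  StrictMonoOn f₀ (Set.Icc 0 1) ∧ f₀ 0 = 0 ∧ f₀ 1 = 1 ∧
  (∀ x ∈ Set.Ioo (0:ℝ) 1, x < f₀ x) ∧
  deriv f₀ 0 = β₀ ∧ 1 < β₀ ∧ deriv f₀ 1 = lam₀ ∧ 0 < lam₀ ∧ lam₀ < 1 ∧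
  (∀ x ∈ Set.Icc (0:ℝ) 1, lam₀ ≤ deriv f₀ x)

/-- Condition (F1) on the fiber map `f₁`. -/
def F1cond (f₁ : ℝ → ℝ) (γ lam₀ : ℝ) : Prop :=
  (∀ x, f₁ x = γ * (1 - x)) ∧ lam₀ ≤ γ ∧ γ < 1

/-- Condition (F2) on the fiber map `f₂`. -/
def F2cond (f₂ : ℝ → ℝ) (β₂ lam₀ : ℝ) : Prop :=
  ContDiff ℝ 1 f₂ ∧ Set.MapsTo f₂ (Set.Icc 0 1) (Set.Icc 0 1) ∧
  StrictMonoOn f₂ (Set.Icc 0 1) ∧ f₂ 0 = 0 ∧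
  deriv f₂ 0 = β₂ ∧ 1 < β₂ ∧ (∀ x ∈ Set.Icc (0:ℝ) 1, lam₀ ≤ deriv f₂ x) ∧
  ∃ p₂, p₂ ∈ Set.Ioo (0:ℝ) 1 ∧ f₂ p₂ = p₂ ∧ (∀ x ∈ Set.Ioo 0 p₂, x < f₂ x) ∧
    (∀ x ∈ Set.Ioc p₂ 1, f₂ x < x)

/-- Condition (F01). -/
def F01cond (f₀ : ℝ → ℝ) (β₀ lam₀ γ : ℝ) : Prop :=
  AntitoneOn (deriv f₀) (Set.Icc 0 1) ∧
  1 < γ * (lam₀ ^ 3 * (1 - lam₀) / (1 - β₀⁻¹))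

/-- Condition (F012), with `H = [0,δ]`, `H' = [1-γ⁻¹δ,1]`, and the derived constants
`β' = βpr`, `β_H = βH`, `λ' = lampr`, `L`. -/
def F012cond (f₀ f₁ f₂ : ℝ → ℝ) (γ lam₀ β₀ β₂ δ βpr βH lampr : ℝ) (L : ℕ) : Prop :=
  (∀ x ∈ Set.Icc (0:ℝ) 1, deriv f₀ x ≤ max β₀ β₂ ∧ deriv f₂ x ≤ max β₀ β₂) ∧
  0 < δ ∧ δ < γ ∧
  (f₁ '' Set.Icc 0 δ) ∩ Set.Icc 0 δ = ∅ ∧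
  (f₁ '' Set.Icc (1 - γ⁻¹ * δ) 1) ∩ Set.Icc (1 - γ⁻¹ * δ) 1 = ∅ ∧
  (f₁ '' Set.Icc 0 1) ∩ Set.Icc (1 - γ⁻¹ * δ) 1 = ∅ ∧
  (f₂ '' Set.Icc 0 1) ∩ Set.Icc (1 - γ⁻¹ * δ) 1 = ∅ ∧
  IsGreatest {y | ∃ x ∈ Set.Icc δ 1, y = max (deriv f₀ x) (deriv f₂ x)} βpr ∧
  1 < βpr ∧ βpr < min β₀ β₂ ∧
  IsLeast {y | ∃ x ∈ Set.Icc (0:ℝ) δ, y = min (deriv f₀ x) (deriv f₂ x)} βH ∧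
  1 < βH ∧ βH < min β₀ β₂ ∧
  IsGreatest {y | ∃ x ∈ Set.Icc (1 - γ⁻¹ * δ) 1, y = deriv f₀ x} lampr ∧
  lampr < 1 ∧
  |Real.log lam₀| * Real.log (max β₀ β₂) / Real.log βH - |Real.log lampr|
      + (2 / 3) * Real.log (max β₀ β₂) < (3 / 4) * Real.log βpr ∧
  1 ≤ L ∧
  4 * |Real.log lam₀| * Real.log (max β₀ β₂) / (Real.log βH * Real.log βpr) < (L : ℝ) ∧
  Real.log ((max β₀ β₂) ^ L * γ) / ((L : ℝ) + 1) < Real.log βpr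

/-- `f_{ξ_{n-1}} ∘ ⋯ ∘ f_{ξ₀}`. -/
def seqComp (fs : Fin 3 → ℝ → ℝ) (ξ : ℕ → Fin 3) : ℕ → ℝ → ℝ
  | 0 => id
  | n + 1 => fun x => fs (ξ n) (seqComp fs ξ n x)

/-- The upper Lyapunov exponent of the point `p` under the itinerary `ξ`. -/
def lyapUpper (fs : Fin 3 → ℝ → ℝ) (p : ℝ) (ξ : ℕ → Fin 3) : ℝ :=
  Filter.limsup (fun n : ℕ => (1 / (n : ℝ)) * Real.log |deriv (seqComp fs ξ n) p|) Filter.atTop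

/-- Membership in the exceptional set `E`. -/
def exceptional (fs : Fin 3 → ℝ → ℝ) (p : ℝ) (ξ : ℕ → Fin 3) : Prop :=
  ∃ m : ℕ, seqComp fs ξ m p = 0 ∧ ∀ j, m ≤ j → (ξ j = 0 ∨ ξ j = 2)

/-- `f_[w] = f_{w_{m-1}} ∘ ⋯ ∘ f_{w₀}` for a finite word `w`. -/
def wordComp {α : Type*} (fs : α → ℝ → ℝ) (w : List α) : ℝ → ℝ :=
  fun x => w.foldl (fun y i => fs i y) x

/-- The two-sided sequence space `Σ₃`. -/
abbrev Sig3 := ℤ → Fin 3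

/-- The state space `Σ₃ × [0,1]`. -/
abbrev XSp := Sig3 × (Set.Icc (0:ℝ) 1)

instance : UniformSpace (Fin 3) := ⊥

/-- The left shift on `Σ₃`. -/
def shiftMap (ξ : Sig3) : Sig3 := fun i => ξ (i + 1)

/-- The step skew product `G(ξ,x) = (σξ, f_{ξ₀}(x))` on `Σ₃ × [0,1]`. -/
def Gmap (fs : Fin 3 → ℝ → ℝ) : XSp → XSp :=
  fun p => (shiftMap p.1, Set.projIcc 0 1 (by norm_num) (fs (p.1 0) (p.2 : ℝ)))

/-- The maximal invariant set `Λ_G = ⋂ₙ Gⁿ(Σ₃ × [0,1])`. -/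
def LamG (fs : Fin 3 → ℝ → ℝ) : Set XSp := ⋂ n : ℕ, (Gmap fs)^[n] '' Set.univ

/-- The lateral horseshoe `Λ₀₂`. -/
def Lam02 : Set XSp := {p | (∀ i, p.1 i ≠ 1) ∧ (p.2 : ℝ) = 0}

/-- The central derivative potential `φ(ξ,x) = log|f_{ξ₀}'(x)|`. -/
def phiC (fs : Fin 3 → ℝ → ℝ) (p : XSp) : ℝ := Real.log |deriv (fs (p.1 0)) (p.2 : ℝ)|

/-- The central Lyapunov exponent `χ(μ) = ∫ φ dμ` of a measure. -/
def chiOf (fs : Fin 3 → ℝ → ℝ) (μ : Measure XSp) : ℝ := ∫ p, phiC fs p ∂μ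

/-- `ν` is the `(p 0, p 1, p 2)`-Bernoulli measure on `Σ₃`. -/
def IsBernoulli (p : Fin 3 → ℝ) (ν : Measure Sig3) : Prop :=
  IsProbabilityMeasure ν ∧ ∀ (s : Finset ℤ) (a : ℤ → Fin 3),
    ν {ξ | ∀ i ∈ s, ξ i = a i} = ENNReal.ofReal (∏ i ∈ s, p (a i))

/-!
A return word `0ⁿ 1 0ᵏ 1 0ᵐ` carries a point of `(b₃, b]`, where `f₀³ b₃ = b`, up towards the
attracting fixed point `1`, flips it close to `0` by `f₁`, lets it climb and flips it again, and
finally lets it climb out of `[0, b₃]` through the repelling region near `0`. Since `f₀` is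
concave, along an orbit the displacement `f₀ w - w` grows by at most the derivative of the
iterate; it is comparable to `1 - w` near `1` and to `w` near `0`, so the derivative of the
return map is bounded below by a product of ratios of displacements, which (F01) makes larger
than some `θ > 1` once `b` is small. Composing returns expands any subinterval `J = [u, v]`
until the image of its right end reaches `b`, while the image of its left end stays below
`b₂ = f₀ b₃ ≤ u`. Such an expanding map has a unique fixed point in `J`, and the images of its
neighbourhoods grow by the factor `θ` until they cover `J` and then `[b₂, b]`.
-/

open Topology

def ExpandingOn (θ : ℝ) (F : ℝ → ℝ) (s : Set ℝ) : Prop :=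
  ∀ x ∈ s, DifferentiableAt ℝ F x ∧ θ ≤ deriv F x

namespace ExpandingOn

variable {θ : ℝ} {F G : ℝ → ℝ} {u v q : ℝ}

lemma continuousOn {s : Set ℝ} (hF : ExpandingOn θ F s) : ContinuousOn F s :=
  fun x hx => (hF x hx).1.continuousAt.continuousWithinAt

lemma mono {s t : Set ℝ} (hF : ExpandingOn θ F s) (hts : t ⊆ s) : ExpandingOn θ F t :=
  fun x hx => hF x (hts hx)

lemma mul_sub_le (hF : ExpandingOn θ F (Icc u v)) {x y : ℝ} (hx : x ∈ Icc u v)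
    (hy : y ∈ Icc u v) (hxy : x ≤ y) : θ * (y - x) ≤ F y - F x :=
  (convex_Icc u v).mul_sub_le_image_sub_of_le_deriv hF.continuousOn
    (fun z hz => (hF z (interior_subset hz)).1.differentiableWithinAt)
    (fun z hz => (hF z (interior_subset hz)).2) x hx y hy hxy

lemma mapsTo (hF : ExpandingOn θ F (Icc u v)) (hθ : 0 ≤ θ) :
    MapsTo F (Icc u v) (Icc (F u) (F v)) := fun x hx =>
  ⟨by linarith [hF.mul_sub_le (left_mem_Icc.2 (hx.1.trans hx.2)) hx hx.1,
      mul_nonneg hθ (sub_nonneg.2 hx.1)],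
    by linarith [hF.mul_sub_le hx (right_mem_Icc.2 (hx.1.trans hx.2)) hx.2,
      mul_nonneg hθ (sub_nonneg.2 hx.2)]⟩

lemma Icc_subset_image (hF : ExpandingOn θ F (Icc u v)) (huv : u ≤ v) :
    Icc (F u) (F v) ⊆ F '' Icc u v :=
  intermediate_value_Icc huv hF.continuousOn

lemma comp (hF : ExpandingOn θ F (Icc u v)) (hG : ExpandingOn θ G (Icc (F u) (F v)))
    (hθ : 1 ≤ θ) : ExpandingOn θ (G ∘ F) (Icc u v) := by
  intro x hx
  obtain ⟨hGd, hGθ⟩ := hG (F x) (hF.mapsTo (by linarith) hx)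
  obtain ⟨hFd, hFθ⟩ := hF x hx
  refine ⟨hGd.comp x hFd, ?_⟩
  rw [deriv_comp x hGd hFd]
  nlinarith

lemma exists_fixedPt (hF : ExpandingOn θ F (Icc u v)) (hθ : 1 < θ) (huv : u ≤ v)
    (hu : F u ≤ u) (hv : v ≤ F v) :
    ∃ q ∈ Icc u v, F q = q ∧ ∀ x ∈ Icc u v, F x = x → x = q := by
  obtain ⟨q, hq, hFq⟩ : ∃ q ∈ Icc u v, F q - q = 0 :=
    intermediate_value_Icc huv (hF.continuousOn.sub continuousOn_id)
      ⟨sub_nonpos.2 hu, sub_nonneg.2 hv⟩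
  refine ⟨q, hq, sub_eq_zero.1 hFq, fun x hx hFx => ?_⟩
  rw [sub_eq_zero] at hFq
  rcases le_total x q with hxq | hqx
  · nlinarith [hF.mul_sub_le hx hq hxq]
  · nlinarith [hF.mul_sub_le hq hx hqx]

lemma Icc_subset_image_Icc (hF : ExpandingOn θ F (Icc u v)) (hq : q ∈ Icc u v)
    (hFq : F q = q) (hu : F u ≤ u) (hv : v ≤ F v) {δ : ℝ} (hδ : 0 ≤ δ) :
    Icc (max u (q - θ * δ)) (min v (q + θ * δ)) ⊆
      F '' Icc (max u (q - δ)) (min v (q + δ)) := by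
  have hsub : Icc (max u (q - δ)) (min v (q + δ)) ⊆ Icc u v :=
    Icc_subset_Icc (le_max_left _ _) (min_le_left _ _)
  have hlo : F (max u (q - δ)) ≤ max u (q - θ * δ) := by
    rcases le_total (q - δ) u with h | h
    · rw [max_eq_left h]; exact hu.trans (le_max_left _ _)
    · rw [max_eq_right h]
      have := hF.mul_sub_le ⟨h, by linarith [hq.2]⟩ hq (by linarith)
      exact le_max_of_le_right (by linarith)
  have hhi : min v (q + θ * δ) ≤ F (min v (q + δ)) := by
    rcases le_total v (q + δ) with h | h
    · rw [min_eq_left h]; exact (min_le_left _ _).trans hv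
    · rw [min_eq_right h]
      have := hF.mul_sub_le hq ⟨by linarith [hq.1], h⟩ (by linarith)
      exact min_le_of_right_le (by linarith)
  refine (Icc_subset_Icc hlo hhi).trans ((hF.mono hsub).Icc_subset_image ?_)
  exact (max_le hq.1 (by linarith)).trans (le_min hq.2 (by linarith))

lemma Icc_subset_iUnion_iterate_image (hF : ExpandingOn θ F (Icc u v)) (hθ : 1 < θ)
    (hq : q ∈ Icc u v) (hFq : F q = q) (hu : F u ≤ u) (hv : v ≤ F v) {ε : ℝ} (hε : 0 < ε) :
    Icc (F u) (F v) ⊆ ⋃ n : ℕ, F^[n] '' (Icc (q - ε) (q + ε) ∩ Icc u v) := by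
  set U := ⋃ n : ℕ, F^[n] '' (Icc (q - ε) (q + ε) ∩ Icc u v)
  have hU : F '' U ⊆ U := by
    rintro _ ⟨_, hyU, rfl⟩
    obtain ⟨n, x, hx, rfl⟩ := mem_iUnion.1 hyU
    exact mem_iUnion.2 ⟨n + 1, x, hx, Function.iterate_succ_apply' F n x⟩
  have hgrow : ∀ n : ℕ, Icc (max u (q - θ ^ n * ε)) (min v (q + θ ^ n * ε)) ⊆ U := by
    intro n
    induction n with
    | zero =>
      intro x hx
      rw [pow_zero, one_mul] at hx
      exact mem_iUnion.2 ⟨0, x, ⟨⟨le_of_max_le_right hx.1, le_of_le_min_right hx.2⟩,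
        ⟨le_of_max_le_left hx.1, le_of_le_min_left hx.2⟩⟩, rfl⟩
    | succ n ih =>
      rw [pow_succ', mul_assoc]
      exact (hF.Icc_subset_image_Icc hq hFq hu hv (by positivity)).trans
        ((image_mono ih).trans hU)
  obtain ⟨N, hN⟩ := pow_unbounded_of_one_lt ((v - u) / ε) hθ
  rw [div_lt_iff₀ hε] at hN
  have hmax : max u (q - θ ^ N * ε) = u := max_eq_left (by linarith [hq.2])
  have hmin : min v (q + θ ^ N * ε) = v := min_eq_left (by linarith [hq.1])
  have hall := hgrow N
  rw [hmax, hmin] at hall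
  exact (hF.Icc_subset_image (hq.1.trans hq.2)).trans ((image_mono hall).trans hU)

end ExpandingOn

theorem exists_expandingOn_of_step {P : Set (ℝ → ℝ)} (hP : ∀ F ∈ P, ∀ G ∈ P, G ∘ F ∈ P)
    {θ a a' c : ℝ} (hθ : 1 < θ)
    (step : ∀ s t, a < s → s < t → t ≤ c →
      ∃ F ∈ P, ExpandingOn θ F (Icc s t) ∧ a < F s ∧ F s ≤ a')
    {s t : ℝ} (hs : a < s) (hst : s < t) (htc : t ≤ c) :
    ∃ F ∈ P, ExpandingOn θ F (Icc s t) ∧ F s ≤ a' ∧ c ≤ F t := by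
  obtain ⟨N, hN⟩ := pow_unbounded_of_one_lt ((c - a) / (t - s)) hθ
  rw [div_lt_iff₀ (sub_pos.2 hst)] at hN
  induction N generalizing s t with
  | zero => linarith
  | succ N ih =>
    obtain ⟨F, hFP, hF, haF, hFa'⟩ := step s t hs hst htc
    have hexp := hF.mul_sub_le (left_mem_Icc.2 hst.le) (right_mem_Icc.2 hst.le) hst.le
    by_cases hcF : c ≤ F t
    · exact ⟨F, hFP, hF, hFa', hcF⟩
    have hθN : 0 < θ ^ N := by positivity
    obtain ⟨G, hGP, hG, hGa', hcG⟩ := ih haF (by nlinarith) (not_le.1 hcF).le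
      (by rw [pow_succ] at hN; nlinarith)
    exact ⟨G ∘ F, hP F hFP G hGP, hF.comp hG hθ.le, hGa', hcG⟩

lemma exists_le_and_lt_succ {α : Type*} [LinearOrder α] {u : ℕ → α} {c : α} (h₀ : u 0 ≤ c)
    (h : ∃ N, c < u N) : ∃ n, u n ≤ c ∧ c < u (n + 1) := by
  by_contra! H
  obtain ⟨N, hN⟩ := h
  exact hN.not_ge (Nat.rec h₀ H N)

structure IsConcaveNorthSouth (f : ℝ → ℝ) : Prop where
  contDiff : ContDiff ℝ 1 f
  map_zero : f 0 = 0
  map_one : f 1 = 1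
  lt_self : ∀ x ∈ Ioo (0 : ℝ) 1, x < f x
  antitoneOn_deriv : AntitoneOn (deriv f) (Icc 0 1)
  deriv_one_pos : 0 < deriv f 1
  one_lt_deriv_zero : 1 < deriv f 0

namespace IsConcaveNorthSouth

variable {f : ℝ → ℝ} {x y a c : ℝ}

lemma differentiable (hf : IsConcaveNorthSouth f) : Differentiable ℝ f :=
  hf.contDiff.differentiable one_ne_zero

lemma continuous (hf : IsConcaveNorthSouth f) : Continuous f :=
  hf.differentiable.continuous

lemma deriv_one_le (hf : IsConcaveNorthSouth f) (hx : x ∈ Icc (0 : ℝ) 1) :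
    deriv f 1 ≤ deriv f x :=
  hf.antitoneOn_deriv hx (right_mem_Icc.2 zero_le_one) hx.2

lemma deriv_pos (hf : IsConcaveNorthSouth f) (hx : x ∈ Icc (0 : ℝ) 1) : 0 < deriv f x :=
  hf.deriv_one_pos.trans_le (hf.deriv_one_le hx)

lemma strictMonoOn (hf : IsConcaveNorthSouth f) : StrictMonoOn f (Icc 0 1) :=
  strictMonoOn_of_deriv_pos (convex_Icc 0 1) hf.continuous.continuousOn
    fun _ hx => hf.deriv_pos (interior_subset hx)

lemma mapsTo (hf : IsConcaveNorthSouth f) : MapsTo f (Icc 0 1) (Icc 0 1) := fun _ hx =>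
  ⟨hf.map_zero ▸ hf.strictMonoOn.monotoneOn (left_mem_Icc.2 zero_le_one) hx hx.1,
    hf.map_one ▸ hf.strictMonoOn.monotoneOn hx (right_mem_Icc.2 zero_le_one) hx.2⟩

lemma mapsTo_Ioo (hf : IsConcaveNorthSouth f) : MapsTo f (Ioo 0 1) (Ioo 0 1) := fun x hx =>
  ⟨hx.1.trans (hf.lt_self x hx), hf.map_one ▸ hf.strictMonoOn (Ioo_subset_Icc_self hx)
    (right_mem_Icc.2 zero_le_one) hx.2⟩

lemma surjOn_Ioo (hf : IsConcaveNorthSouth f) : SurjOn f (Ioo 0 1) (Ioo 0 1) := by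
  simpa [SurjOn, hf.map_zero, hf.map_one] using
    intermediate_value_Ioo zero_le_one hf.continuous.continuousOn

lemma le_self (hf : IsConcaveNorthSouth f) (hx : x ∈ Icc (0 : ℝ) 1) : x ≤ f x := by
  rcases hx.1.eq_or_lt with rfl | h0
  · rw [hf.map_zero]
  rcases hx.2.eq_or_lt with rfl | h1
  · rw [hf.map_one]
  exact (hf.lt_self x ⟨h0, h1⟩).le

lemma sub_le_deriv_mul (hf : IsConcaveNorthSouth f) (hx : 0 ≤ x) (hxy : x ≤ y) (hy : y ≤ 1) :
    f y - f x ≤ deriv f x * (y - x) :=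
  (convex_Icc x y).image_sub_le_mul_sub_of_deriv_le hf.continuous.continuousOn
    hf.differentiable.differentiableOn
    (fun _ hz => hf.antitoneOn_deriv ⟨hx, hxy.trans hy⟩
      ⟨hx.trans (interior_subset hz).1, (interior_subset hz).2.trans hy⟩ (interior_subset hz).1)
    x (left_mem_Icc.2 hxy) y (right_mem_Icc.2 hxy) hxy

lemma deriv_mul_le_sub (hf : IsConcaveNorthSouth f) (hx : 0 ≤ x) (hxy : x ≤ y) (hy : y ≤ 1) :
    deriv f y * (y - x) ≤ f y - f x :=
  (convex_Icc x y).mul_sub_le_image_sub_of_le_deriv hf.continuous.continuousOn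
    hf.differentiable.differentiableOn
    (fun _ hz => hf.antitoneOn_deriv ⟨hx.trans (interior_subset hz).1,
      (interior_subset hz).2.trans hy⟩ ⟨hx.trans hxy, hy⟩ (interior_subset hz).2)
    x (left_mem_Icc.2 hxy) y (right_mem_Icc.2 hxy) hxy

lemma le_deriv_zero_mul (hf : IsConcaveNorthSouth f) (hx : x ∈ Icc (0 : ℝ) 1) :
    f x ≤ deriv f 0 * x := by
  simpa [hf.map_zero] using hf.sub_le_deriv_mul le_rfl hx.1 hx.2

lemma deriv_one_mul_le (hf : IsConcaveNorthSouth f) (hx : x ∈ Icc (0 : ℝ) 1) :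
    deriv f 1 * (1 - x) ≤ 1 - f x := by
  simpa [hf.map_one] using hf.deriv_mul_le_sub hx.1 hx.2 le_rfl

lemma deriv_one_lt_one (hf : IsConcaveNorthSouth f) : deriv f 1 < 1 := by
  have h := hf.deriv_one_mul_le (x := 1 / 2) ⟨by norm_num, by norm_num⟩
  have := hf.lt_self (1 / 2) ⟨by norm_num, by norm_num⟩
  linarith

lemma deriv_mul_le (hf : IsConcaveNorthSouth f) (hx : 0 ≤ x) (hxa : x ≤ a) (ha : a ≤ 1) :
    deriv f a * x ≤ f x := by
  have h := hf.deriv_mul_le_sub le_rfl hx (hxa.trans ha)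
  have ha' := hf.antitoneOn_deriv ⟨hx, hxa.trans ha⟩ ⟨hx.trans hxa, ha⟩ hxa
  rw [hf.map_zero, sub_zero, sub_zero] at h
  nlinarith

lemma mul_le_sub_self (hf : IsConcaveNorthSouth f) (hx : 0 ≤ x) (hxa : x ≤ a) (ha : a ≤ 1) :
    (deriv f a - 1) * x ≤ f x - x := by
  linarith [hf.deriv_mul_le hx hxa ha]

lemma mul_one_sub_le_sub_self (hf : IsConcaveNorthSouth f) (ha : 0 ≤ a) (hax : a ≤ x)
    (hx : x ≤ 1) : (1 - deriv f a) * (1 - x) ≤ f x - x := by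
  have h' := hf.sub_le_deriv_mul (ha.trans hax) hx le_rfl
  have ha' := hf.antitoneOn_deriv ⟨ha, hax.trans hx⟩ ⟨ha.trans hax, hx⟩ hax
  rw [hf.map_one] at h'
  nlinarith

lemma sub_self_le (hf : IsConcaveNorthSouth f) (hx : x ∈ Icc (0 : ℝ) 1) :
    f x - x ≤ (deriv f 0 - 1) * x := by
  linarith [hf.le_deriv_zero_mul hx]

lemma iterate_mem (hf : IsConcaveNorthSouth f) (hx : x ∈ Icc (0 : ℝ) 1) (n : ℕ) :
    f^[n] x ∈ Icc (0 : ℝ) 1 :=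
  hf.mapsTo.iterate n hx

lemma iterate_mem_Ioo (hf : IsConcaveNorthSouth f) (hx : x ∈ Ioo (0 : ℝ) 1) (n : ℕ) :
    f^[n] x ∈ Ioo (0 : ℝ) 1 :=
  hf.mapsTo_Ioo.iterate n hx

lemma monotoneOn_iterate (hf : IsConcaveNorthSouth f) (n : ℕ) :
    MonotoneOn f^[n] (Icc 0 1) := by
  induction n with
  | zero => exact monotone_id.monotoneOn _
  | succ n ih =>
    rw [Function.iterate_succ']
    exact hf.strictMonoOn.monotoneOn.comp ih (hf.mapsTo.iterate n)

lemma monotone_iterate_apply (hf : IsConcaveNorthSouth f) (hx : x ∈ Icc (0 : ℝ) 1) :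
    Monotone fun n => f^[n] x :=
  monotone_nat_of_le_succ fun n => by
    rw [Function.iterate_succ_apply']
    exact hf.le_self (hf.iterate_mem hx n)

lemma iterate_le_pow_mul (hf : IsConcaveNorthSouth f) (hx : x ∈ Icc (0 : ℝ) 1) (n : ℕ) :
    f^[n] x ≤ deriv f 0 ^ n * x := by
  induction n with
  | zero => simp
  | succ n ih =>
    rw [Function.iterate_succ_apply', pow_succ', mul_assoc]
    exact (hf.le_deriv_zero_mul (hf.iterate_mem hx n)).trans
      (mul_le_mul_of_nonneg_left ih (zero_le_one.trans hf.one_lt_deriv_zero.le))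

lemma pow_mul_one_sub_le (hf : IsConcaveNorthSouth f) (hx : x ∈ Icc (0 : ℝ) 1) (n : ℕ) :
    deriv f 1 ^ n * (1 - x) ≤ 1 - f^[n] x := by
  induction n with
  | zero => simp
  | succ n ih =>
    rw [Function.iterate_succ_apply', pow_succ', mul_assoc]
    exact (mul_le_mul_of_nonneg_left ih hf.deriv_one_pos.le).trans
      (hf.deriv_one_mul_le (hf.iterate_mem hx n))

/-- Below the level `a` the map expands at least by `f' a`, and once above `a` an orbit stays
there. -/
lemma le_iterate_of_le_pow_mul (hf : IsConcaveNorthSouth f) (ha : a ≤ 1) (hca : c ≤ a)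
    (hx : x ∈ Icc (0 : ℝ) 1) {J : ℕ} (hJ : c ≤ deriv f a ^ J * x) : c ≤ f^[J] x := by
  induction J generalizing x with
  | zero => simpa using hJ
  | succ J ih =>
    rw [Function.iterate_succ_apply]
    rcases le_total a x with hax | hxa
    · exact hca.trans (hax.trans (hf.le_self hx) |>.trans
        (hf.monotone_iterate_apply (hf.mapsTo hx) (Nat.zero_le J)))
    · refine ih (hf.mapsTo hx) (hJ.trans ?_)
      rw [pow_succ, mul_assoc]
      exact mul_le_mul_of_nonneg_left (hf.deriv_mul_le hx.1 hxa ha)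
        (pow_nonneg (hf.deriv_pos ⟨hx.1.trans hxa, ha⟩).le J)

lemma tendsto_iterate (hf : IsConcaveNorthSouth f) (hx : x ∈ Ioo (0 : ℝ) 1) :
    Tendsto (fun n => f^[n] x) atTop (𝓝 1) := by
  have hbdd : BddAbove (range fun n => f^[n] x) :=
    ⟨1, by rintro _ ⟨n, rfl⟩; exact (hf.iterate_mem_Ioo hx n).2.le⟩
  have hlim := tendsto_atTop_ciSup (hf.monotone_iterate_apply (Ioo_subset_Icc_self hx)) hbdd
  set L := ⨆ n, f^[n] x
  have hxL : x ≤ L := le_ciSup hbdd 0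
  have hL1 : L ≤ 1 := ciSup_le fun n => (hf.iterate_mem_Ioo hx n).2.le
  have hfix : f L = L := isFixedPt_of_tendsto_iterate hlim hf.continuous.continuousAt
  obtain hL | hL1 := hL1.eq_or_lt
  · rwa [hL] at hlim
  · exact absurd hfix (hf.lt_self L ⟨hx.1.trans_le hxL, hL1⟩).ne'

lemma exists_lt_iterate (hf : IsConcaveNorthSouth f) (hx : x ∈ Ioo (0 : ℝ) 1) (hc : c < 1) :
    ∃ n, c < f^[n] x :=
  ((hf.tendsto_iterate hx).eventually (lt_mem_nhds hc)).exists

lemma deriv_iterate_succ (hf : IsConcaveNorthSouth f) (n : ℕ) (x : ℝ) :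
    deriv f^[n + 1] x = deriv f (f^[n] x) * deriv f^[n] x := by
  rw [Function.iterate_succ']
  exact deriv_comp x (hf.differentiable _) (hf.differentiable.iterate n x)

lemma deriv_iterate_nonneg (hf : IsConcaveNorthSouth f) (hx : x ∈ Icc (0 : ℝ) 1) (n : ℕ) :
    0 ≤ deriv f^[n] x := by
  induction n with
  | zero => simp
  | succ n ih =>
    rw [hf.deriv_iterate_succ]
    exact mul_nonneg (hf.deriv_pos (hf.iterate_mem hx n)).le ih

lemma sub_self_iterate_le (hf : IsConcaveNorthSouth f) (hx : x ∈ Icc (0 : ℝ) 1) (n : ℕ) :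
    f (f^[n] x) - f^[n] x ≤ deriv f^[n] x * (f x - x) := by
  induction n with
  | zero => simp
  | succ n ih =>
    have hn := hf.iterate_mem hx n
    rw [Function.iterate_succ_apply', hf.deriv_iterate_succ, mul_assoc]
    exact (hf.sub_le_deriv_mul hn.1 (hf.le_self hn) (hf.mapsTo hn).2).trans
      (mul_le_mul_of_nonneg_left ih (hf.deriv_pos hn).le)

lemma sub_self_iterate_le_mul (hf : IsConcaveNorthSouth f) (hx : x ∈ Icc (0 : ℝ) 1) (n : ℕ) :
    f (f^[n] x) - f^[n] x ≤ deriv f^[n] x * ((deriv f 0 - 1) * x) :=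
  (hf.sub_self_iterate_le hx n).trans
    (mul_le_mul_of_nonneg_left (hf.sub_self_le hx) (hf.deriv_iterate_nonneg hx n))

end IsConcaveNorthSouth

section Words

variable {α : Type*} (fs : α → ℝ → ℝ)

lemma wordComp_append (w₁ w₂ : List α) :
    wordComp fs (w₁ ++ w₂) = wordComp fs w₂ ∘ wordComp fs w₁ :=
  funext fun _ => List.foldl_append

lemma wordComp_replicate (n : ℕ) (a : α) : wordComp fs (List.replicate n a) = (fs a)^[n] := by
  induction n with
  | zero => rfl
  | succ n ih =>
    rw [List.replicate_succ', wordComp_append, ih, Function.iterate_succ']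
    rfl

lemma wordComp_singleton (a : α) : wordComp fs [a] = fs a := rfl

lemma comp_mem_range_wordComp {F G : ℝ → ℝ} (hF : F ∈ range (wordComp fs))
    (hG : G ∈ range (wordComp fs)) : G ∘ F ∈ range (wordComp fs) := by
  obtain ⟨w₁, rfl⟩ := hF
  obtain ⟨w₂, rfl⟩ := hG
  exact ⟨w₁ ++ w₂, wordComp_append fs w₁ w₂⟩

end Words

def affineFlip (γ x : ℝ) : ℝ := γ * (1 - x)

section AffineFlip

variable {γ x : ℝ}

lemma affineFlip_mem_Ioo (hγ : γ ∈ Ioc (0 : ℝ) 1) (hx : x ∈ Ioo (0 : ℝ) 1) :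
    affineFlip γ x ∈ Ioo (0 : ℝ) 1 :=
  ⟨mul_pos hγ.1 (sub_pos.2 hx.2),
    (mul_le_of_le_one_left (sub_pos.2 hx.2).le hγ.2).trans_lt (by linarith [hx.1])⟩

lemma antitone_affineFlip (hγ : 0 ≤ γ) : Antitone (affineFlip γ) := fun _ _ h =>
  mul_le_mul_of_nonneg_left (sub_le_sub_left h 1) hγ

lemma hasDerivAt_affineFlip : HasDerivAt (affineFlip γ) (-γ) x := by
  have h := ((hasDerivAt_id x).const_sub 1).const_mul γ
  simp only [mul_neg, mul_one] at h
  exact h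

end AffineFlip

def returnMap (f : ℝ → ℝ) (γ : ℝ) (n k m : ℕ) : ℝ → ℝ :=
  f^[m] ∘ affineFlip γ ∘ f^[k] ∘ affineFlip γ ∘ f^[n]

lemma returnMap_mem_range (f : ℝ → ℝ) (γ : ℝ) (n k m : ℕ) :
    returnMap f γ n k m ∈ range (wordComp ![f, affineFlip γ]) := by
  refine ⟨List.replicate n 0 ++ [1] ++ List.replicate k 0 ++ [1] ++ List.replicate m 0, ?_⟩
  simp only [wordComp_append, wordComp_replicate, wordComp_singleton, returnMap,
    Matrix.cons_val_zero, Matrix.cons_val_one]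

namespace IsConcaveNorthSouth

variable {f : ℝ → ℝ} {γ p p' b : ℝ}

lemma deriv_returnMap (hf : IsConcaveNorthSouth f) (n k m : ℕ) (x : ℝ) :
    deriv (returnMap f γ n k m) x =
      γ ^ 2 * (deriv f^[m] (affineFlip γ (f^[k] (affineFlip γ (f^[n] x)))) *
        deriv f^[k] (affineFlip γ (f^[n] x)) * deriv f^[n] x) := by
  have hd : ∀ j y, HasDerivAt f^[j] (deriv f^[j] y) y :=
    fun j y => (hf.differentiable.iterate j y).hasDerivAt
  refine (((hd m _).comp x (hasDerivAt_affineFlip.comp x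
    ((hd k _).comp x (hasDerivAt_affineFlip.comp x (hd n x)))))).deriv.trans ?_
  simp only [Function.comp_apply]
  ring

lemma monotoneOn_returnMap (hf : IsConcaveNorthSouth f) (hγ : γ ∈ Icc (0 : ℝ) 1)
    (n k m : ℕ) : MonotoneOn (returnMap f γ n k m) (Icc 0 1) := by
  have hflip : MapsTo (affineFlip γ) (Icc 0 1) (Icc 0 1) := fun y hy =>
    ⟨mul_nonneg hγ.1 (sub_nonneg.2 hy.2), by unfold affineFlip; nlinarith [hγ.2, hy.1, hy.2]⟩
  have h₁ : AntitoneOn (affineFlip γ ∘ f^[n]) (Icc 0 1) :=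
    (antitone_affineFlip hγ.1).comp_monotoneOn (hf.monotoneOn_iterate n)
  have h₂ : AntitoneOn (f^[k] ∘ affineFlip γ ∘ f^[n]) (Icc 0 1) := fun a ha b hb hab =>
    hf.monotoneOn_iterate k (hflip (hf.mapsTo.iterate n hb)) (hflip (hf.mapsTo.iterate n ha))
      (h₁ ha hb hab)
  have h₃ : MonotoneOn (affineFlip γ ∘ f^[k] ∘ affineFlip γ ∘ f^[n]) (Icc 0 1) :=
    (antitone_affineFlip hγ.1).comp_antitoneOn h₂
  exact (hf.monotoneOn_iterate m).comp h₃
    (hflip.comp ((hf.mapsTo.iterate k).comp (hflip.comp (hf.mapsTo.iterate n))))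

lemma differentiable_returnMap (hf : IsConcaveNorthSouth f) (n k m : ℕ) :
    Differentiable ℝ (returnMap f γ n k m) :=
  have hflip : Differentiable ℝ (affineFlip γ) := fun _ => hasDerivAt_affineFlip.differentiableAt
  (hf.differentiable.iterate m).comp
    (hflip.comp ((hf.differentiable.iterate k).comp (hflip.comp (hf.differentiable.iterate n))))

lemma exists_affineFlip_iterate_mem (hf : IsConcaveNorthSouth f) (hγ : 0 < γ) (hb : 0 < b)
    (hp : p ∈ Ioo (0 : ℝ) 1) (hbp : b ≤ affineFlip γ p) :
    ∃ n, deriv f 1 * b ≤ affineFlip γ (f^[n] p) ∧ affineFlip γ (f^[n] p) < b := by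
  have hle : p ≤ 1 - b / γ := by
    rw [le_sub_comm, div_le_iff₀ hγ, mul_comm]; exact hbp
  obtain ⟨n, hn, hn'⟩ := exists_le_and_lt_succ (u := fun n => f^[n] p) hle
    (hf.exists_lt_iterate hp (by linarith [div_pos hb hγ]))
  refine ⟨n + 1, ?_, ?_⟩
  · have h := hf.deriv_one_mul_le (hf.iterate_mem (Ioo_subset_Icc_self hp) n)
    rw [← Function.iterate_succ_apply' f] at h
    unfold affineFlip
    have : b ≤ γ * (1 - f^[n] p) := by
      rw [← div_le_iff₀' hγ]; linarith
    nlinarith [hf.deriv_one_pos]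
  · have : 1 - f^[n + 1] p < b / γ := by linarith
    rw [lt_div_iff₀ hγ] at this
    unfold affineFlip
    linarith

lemma exists_iterate_mem_Ioc (hf : IsConcaveNorthSouth f) {c : ℝ} (hp : 0 < p) (hpc : p ≤ c)
    (hc : c < 1) : ∃ m, c < f^[m] p ∧ f^[m] p ≤ f c := by
  obtain ⟨m, hm, hm'⟩ := exists_le_and_lt_succ (u := fun n => f^[n] p) hpc
    (hf.exists_lt_iterate ⟨hp, hpc.trans_lt hc⟩ hc)
  refine ⟨m + 1, hm', ?_⟩
  rw [Function.iterate_succ_apply']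
  exact hf.strictMonoOn.monotoneOn (hf.iterate_mem ⟨hp.le, (hpc.trans_lt hc).le⟩ m)
    ⟨hp.le.trans hpc, hc.le⟩ hm

lemma pow_mul_affineFlip_le (hf : IsConcaveNorthSouth f) (hγ : 0 ≤ γ) {j : ℕ}
    (hp : p ∈ Icc (0 : ℝ) 1) (hpp' : p ≤ p') (hp' : p' ≤ f^[j] p) (n : ℕ) :
    deriv f 1 ^ j * affineFlip γ (f^[n] p) ≤ affineFlip γ (f^[n] p') := by
  have hp'01 : p' ∈ Icc (0 : ℝ) 1 := ⟨hp.1.trans hpp', hp'.trans (hf.iterate_mem hp j).2⟩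
  have hmono : f^[n] p' ≤ f^[j] (f^[n] p) := by
    rw [← Function.iterate_add_apply, add_comm, Function.iterate_add_apply]
    exact hf.monotoneOn_iterate n hp'01 (hf.iterate_mem hp j) hp'
  have h := hf.pow_mul_one_sub_le (hf.iterate_mem hp n) j
  unfold affineFlip
  nlinarith [mul_le_mul_of_nonneg_left h hγ]

end IsConcaveNorthSouth

lemma pow_six_add_five_mul_lt_one {l : ℝ} (h0 : 0 < l) (h1 : l < 1) :
    l ^ 6 + 5 * (l ^ 3 * (1 - l)) < 1 := by
  have hamgm₁ : 2 * l ^ 3 ≤ l + l ^ 5 := by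
    nlinarith [mul_nonneg h0.le (sq_nonneg (1 - l ^ 2))]
  have hamgm₂ : 2 * l ^ 3 ≤ l ^ 2 + l ^ 4 := by
    nlinarith [mul_nonneg (sq_nonneg l) (sq_nonneg (1 - l))]
  have hfactor : 1 - (l ^ 6 + 5 * (l ^ 3 * (1 - l))) =
      (1 - l) * (1 + (l + l ^ 5 - 2 * l ^ 3) + (l ^ 2 + l ^ 4 - 2 * l ^ 3)) := by ring
  have : 0 < (1 - l) * (1 + (l + l ^ 5 - 2 * l ^ 3) + (l ^ 2 + l ^ 4 - 2 * l ^ 3)) :=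
    mul_pos (sub_pos.2 h1) (by linarith)
  linarith

/-- The numerical content of (F01): with `a = γ l³ (1 - l)` it reads `β (1 - a) < 1`, and
Bernoulli's inequality `(1 - a)⁵ ≥ 1 - 5a` turns this into `β⁵ (γ l³)² < 1`. -/
lemma sub_one_sq_mul_pow_lt {l γ β : ℝ} (hl0 : 0 < l) (hl1 : l < 1) (hγ0 : 0 < γ)
    (hγ1 : γ < 1) (hβ : 1 < β) (h : 1 < γ * (l ^ 3 * (1 - l) / (1 - β⁻¹))) :
    (β - 1) ^ 2 * β ^ 3 < (1 - l) ^ 2 := by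
  have hβa : β - 1 < β * (γ * l ^ 3 * (1 - l)) := by
    have hβ' : 1 - β⁻¹ = (β - 1) / β := by field_simp
    rw [mul_div_assoc', hβ', one_lt_div (by positivity), ← mul_assoc,
      div_lt_iff₀ (by positivity)] at h
    linarith
  set u := γ * l ^ 3
  set a := u * (1 - l)
  have hu0 : 0 < u := by positivity
  have hul : u < l ^ 3 := mul_lt_of_lt_one_left (by positivity) hγ1
  have hal : a < l ^ 3 * (1 - l) := mul_lt_mul_of_pos_right hul (sub_pos.2 hl1)
  have hsmall := pow_six_add_five_mul_lt_one hl0 hl1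
  have h1a : 0 < 1 - a := by nlinarith [pow_nonneg hl0.le 6]
  have hbern : 1 - 5 * a ≤ (1 - a) ^ 5 := by
    simpa [sub_eq_add_neg] using one_add_mul_le_pow (a := -a) (by linarith) 5
  have hu2 : u ^ 2 < (1 - a) ^ 5 := by
    nlinarith [pow_lt_pow_left₀ hul hu0.le two_ne_zero]
  have hβ5 : β ^ 5 * u ^ 2 < 1 := by
    have : (β * (1 - a)) ^ 5 < 1 := pow_lt_one₀ (by positivity) (by linarith) (by norm_num)
    calc β ^ 5 * u ^ 2 ≤ β ^ 5 * (1 - a) ^ 5 :=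
          mul_le_mul_of_nonneg_left hu2.le (by positivity)
      _ = (β * (1 - a)) ^ 5 := by ring
      _ < 1 := this
  calc (β - 1) ^ 2 * β ^ 3 < (β * a) ^ 2 * β ^ 3 :=
        mul_lt_mul_of_pos_right (pow_lt_pow_left₀ hβa (by linarith) two_ne_zero) (by positivity)
    _ = β ^ 5 * u ^ 2 * (1 - l) ^ 2 := by ring
    _ < 1 * (1 - l) ^ 2 := mul_lt_mul_of_pos_right hβ5 (by nlinarith)
    _ = (1 - l) ^ 2 := one_mul _

lemma sq_mul_le_of_gap_bounds {β γ Λ ρ b x y z D₁ D₂ D₃ : ℝ} (hβ : 1 < β) (hγ : 0 < γ)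
    (hΛ : Λ < 1) (hρ : 1 < ρ) (hb : 0 < b) (hy : 0 < y) (hz : 0 < z) (hxb : x ≤ β ^ 3 * b)
    (hD : 0 ≤ D₃ * D₂ * D₁)
    (h₁ : (1 - Λ) * y ≤ γ * (D₁ * ((β - 1) * x)))
    (h₂ : (1 - Λ) * z ≤ γ * (D₂ * ((β - 1) * y)))
    (h₃ : (ρ - 1) * b ≤ D₃ * ((β - 1) * z)) :
    (1 - Λ) ^ 2 * (ρ - 1) ≤ γ ^ 2 * (D₃ * D₂ * D₁) * ((β - 1) ^ 3 * β ^ 3) := by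
  have h₁₂ := mul_le_mul h₁ h₂ (by nlinarith) ((mul_pos (by linarith) hy).le.trans h₁)
  have h₁₂₃ := mul_le_mul h₁₂ h₃ (by nlinarith)
    ((mul_nonneg (by nlinarith) (by nlinarith)).trans h₁₂)
  have hprod : (1 - Λ) ^ 2 * (ρ - 1) * b ≤ γ ^ 2 * (D₃ * D₂ * D₁) * (β - 1) ^ 3 * x :=
    le_of_mul_le_mul_right (a := y * z) (by linarith) (mul_pos hy hz)
  have hK : 0 ≤ γ ^ 2 * (D₃ * D₂ * D₁) * (β - 1) ^ 3 := by
    have : 0 ≤ (β - 1) ^ 3 := pow_nonneg (by linarith) 3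
    positivity
  refine le_of_mul_le_mul_right (a := b) ?_ hb
  calc (1 - Λ) ^ 2 * (ρ - 1) * b ≤ γ ^ 2 * (D₃ * D₂ * D₁) * (β - 1) ^ 3 * x := hprod
    _ ≤ γ ^ 2 * (D₃ * D₂ * D₁) * (β - 1) ^ 3 * (β ^ 3 * b) := mul_le_mul_of_nonneg_left hxb hK
    _ = _ := by ring

/-- Constants for the return words: on `[0, r]` the map `f` expands at least by `f' r`, on
`[1 - r, 1]` it contracts at least by `f' (1 - r)`; `J₁` and `J₂` are numbers of expanding steps
that undo the distortions `(f' 1)⁴` and `(f' 1)^(J₁ + 1)` met in the construction, and `b₀`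
is the scale below which the construction works. -/
structure ReturnConstants (f : ℝ → ℝ) (γ : ℝ) where
  r : ℝ
  r_pos : 0 < r
  r_le_one : r ≤ 1
  one_lt_deriv : 1 < deriv f r
  deriv_one_sub_lt_one : deriv f (1 - r) < 1
  expansion :
    (deriv f 0 - 1) ^ 3 * deriv f 0 ^ 3 < (1 - deriv f (1 - r)) ^ 2 * (deriv f r - 1)
  J₁ : ℕ
  J₂ : ℕ
  one_le_pow_J₁ : 1 ≤ deriv f r ^ J₁ * deriv f 1 ^ 4
  one_le_pow_J₂ : 1 ≤ deriv f r ^ J₂ * deriv f 1 ^ (J₁ + 1)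
  b₀ : ℝ
  b₀_pos : 0 < b₀
  b₀_le : b₀ ≤ γ * r
  pow_mul_b₀_le : deriv f 0 ^ J₂ * b₀ ≤ r
  b₀_lt : b₀ < γ * (1 - b₀)

namespace ReturnConstants

variable {f : ℝ → ℝ} {γ : ℝ} (C : ReturnConstants f γ)

def θ : ℝ :=
  (1 - deriv f (1 - C.r)) ^ 2 * (deriv f C.r - 1) / ((deriv f 0 - 1) ^ 3 * deriv f 0 ^ 3)

lemma one_lt_θ (hf : IsConcaveNorthSouth f) : 1 < C.θ :=
  (one_lt_div (by have := hf.one_lt_deriv_zero; positivity)).2 C.expansion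

lemma θ_mul_eq (hf : IsConcaveNorthSouth f) :
    C.θ * ((deriv f 0 - 1) ^ 3 * deriv f 0 ^ 3) =
      (1 - deriv f (1 - C.r)) ^ 2 * (deriv f C.r - 1) :=
  div_mul_cancel₀ _ (by have := hf.one_lt_deriv_zero; positivity)

lemma γ_pos (C : ReturnConstants f γ) : 0 < γ :=
  pos_of_mul_pos_left (C.b₀_pos.trans_le C.b₀_le) C.r_pos.le

lemma b₀_lt_one : C.b₀ < 1 := by
  by_contra! h
  nlinarith [C.b₀_lt, C.γ_pos]

lemma b₀_le_r (hγ : γ ≤ 1) : C.b₀ ≤ C.r :=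
  C.b₀_le.trans (mul_le_of_le_one_left C.r_pos.le hγ)

end ReturnConstants

lemma IsConcaveNorthSouth.nonempty_returnConstants {f : ℝ → ℝ} {γ : ℝ}
    (hf : IsConcaveNorthSouth f) (hγ : γ ∈ Ioc (0 : ℝ) 1)
    (hkey : (deriv f 0 - 1) ^ 2 * deriv f 0 ^ 3 < (1 - deriv f 1) ^ 2) :
    Nonempty (ReturnConstants f γ) := by
  have hβ := hf.one_lt_deriv_zero
  have hcont : Continuous (deriv f) := hf.contDiff.continuous_deriv le_rfl
  have hcont' : Continuous fun r => deriv f (1 - r) := hcont.comp (continuous_sub_left 1)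
  have hexp : ∀ᶠ r in 𝓝 0, (deriv f 0 - 1) ^ 3 * deriv f 0 ^ 3 <
      (1 - deriv f (1 - r)) ^ 2 * (deriv f r - 1) := by
    have hφ : Continuous fun r => (1 - deriv f (1 - r)) ^ 2 * (deriv f r - 1) :=
      ((continuous_const.sub hcont').pow 2).mul (hcont.sub continuous_const)
    refine hφ.continuousAt.eventually (eventually_gt_nhds ?_)
    simp only [sub_zero]
    nlinarith
  have hρ : ∀ᶠ r in 𝓝 0, 1 < deriv f r := hcont.continuousAt.eventually (eventually_gt_nhds hβ)
  have hΛ : ∀ᶠ r in 𝓝 (0 : ℝ), deriv f (1 - r) < 1 :=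
    hcont'.continuousAt.eventually (eventually_lt_nhds (by simpa using hf.deriv_one_lt_one))
  obtain ⟨r, ⟨⟨⟨hexp, hρ⟩, hΛ⟩, hr1⟩, hr0⟩ :=
    ((((hexp.and hρ).and hΛ).and (eventually_lt_nhds one_pos)).filter_mono
      nhdsWithin_le_nhds |>.and (self_mem_nhdsWithin (s := Ioi 0))).exists
  have hlam := hf.deriv_one_pos
  obtain ⟨J₁, hJ₁⟩ := pow_unbounded_of_one_lt (deriv f 1 ^ 4)⁻¹ hρ
  obtain ⟨J₂, hJ₂⟩ := pow_unbounded_of_one_lt (deriv f 1 ^ (J₁ + 1))⁻¹ hρ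
  rw [inv_lt_iff_one_lt_mul₀ (by positivity)] at hJ₁ hJ₂
  have hP : 1 ≤ deriv f 0 ^ J₂ := one_le_pow₀ hβ.le
  have hr0 : 0 < r := hr0
  have hb : γ * r / (2 * deriv f 0 ^ J₂) * (2 * deriv f 0 ^ J₂) = γ * r :=
    div_mul_cancel₀ _ (by positivity)
  have hb₀ : 0 < γ * r / (2 * deriv f 0 ^ J₂) := by have := hγ.1; positivity
  exact ⟨r, hr0, hr1.le, hρ, hΛ, hexp, J₁, J₂, hJ₁.le, hJ₂.le, γ * r / (2 * deriv f 0 ^ J₂),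
    hb₀, by nlinarith [hγ.1], by nlinarith [hγ.2], by nlinarith [hγ.1, hγ.2]⟩

namespace IsConcaveNorthSouth

variable {f : ℝ → ℝ} {γ b p p' s t : ℝ}

lemma exists_climb (hf : IsConcaveNorthSouth f) (C : ReturnConstants f γ) {j : ℕ} (hb : 0 < b)
    (hbC : b ≤ C.b₀) (hp : p ∈ Ioo (0 : ℝ) 1) (hpC : p ≤ C.b₀) (hpp' : p ≤ p')
    (hp' : p' ≤ f^[j] p) :
    ∃ n, 1 - C.r ≤ f^[n] p ∧ affineFlip γ (f^[n] p) < b ∧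
      deriv f 1 ^ (j + 1) * b ≤ affineFlip γ (f^[n] p') := by
  have hγ := C.γ_pos
  have hbp : b ≤ affineFlip γ p := by
    unfold affineFlip; nlinarith [C.b₀_lt]
  obtain ⟨n, hn, hn'⟩ := hf.exists_affineFlip_iterate_mem hγ hb hp hbp
  refine ⟨n, ?_, hn', ?_⟩
  · have : γ * (1 - f^[n] p) < γ * C.r := hn'.trans_le (hbC.trans C.b₀_le)
    linarith [lt_of_mul_lt_mul_left this hγ.le]
  · have := hf.pow_mul_affineFlip_le hγ.le (Ioo_subset_Icc_self hp) hpp' hp' n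
    rw [pow_succ, mul_assoc]
    exact (mul_le_mul_of_nonneg_left hn (pow_nonneg hf.deriv_one_pos.le j)).trans this

lemma exists_land (hf : IsConcaveNorthSouth f) (C : ReturnConstants f γ) (hγ : γ ≤ 1)
    (hb : b ∈ Ioo (0 : ℝ) 1) (hfb : f b ≤ C.b₀) (hp : deriv f 1 ^ (C.J₁ + 1) * b ≤ p)
    (hpp' : p ≤ p') (hp'b : p' < b) :
    ∃ m, b < f^[m] p ∧ f^[m] p ≤ f b ∧ f^[m] p' ≤ C.r := by
  have hp0 : 0 < p := (mul_pos (pow_pos hf.deriv_one_pos _) hb.1).trans_le hp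
  have hp01 : p ∈ Icc (0 : ℝ) 1 := ⟨hp0.le, (hpp'.trans hp'b.le).trans hb.2.le⟩
  obtain ⟨m, hm, hm'⟩ := hf.exists_iterate_mem_Ioc hp0 (hpp'.trans hp'b.le) hb.2
  have hbr : b ≤ C.r :=
    (hf.le_self (Ioo_subset_Icc_self hb)).trans (hfb.trans (C.b₀_le_r hγ))
  have hcatch : p' ≤ f^[C.J₂] p := by
    refine hf.le_iterate_of_le_pow_mul C.r_le_one (hp'b.le.trans hbr) hp01 ?_
    have := mul_le_mul_of_nonneg_left hp (pow_nonneg (zero_le_one.trans C.one_lt_deriv.le) C.J₂)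
    nlinarith [C.one_le_pow_J₂]
  refine ⟨m, hm, hm', ?_⟩
  have hfb01 := hf.mapsTo (Ioo_subset_Icc_self hb)
  calc f^[m] p' ≤ f^[m] (f^[C.J₂] p) :=
        hf.monotoneOn_iterate m ⟨hp01.1.trans hpp', hp'b.le.trans hb.2.le⟩
          (hf.iterate_mem hp01 _) hcatch
    _ = f^[C.J₂] (f^[m] p) := by
        rw [← Function.iterate_add_apply, add_comm, Function.iterate_add_apply]
    _ ≤ f^[C.J₂] (f b) := hf.monotoneOn_iterate _ (hf.iterate_mem hp01 m) hfb01 hm'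
    _ ≤ deriv f 0 ^ C.J₂ * f b := hf.iterate_le_pow_mul hfb01 _
    _ ≤ deriv f 0 ^ C.J₂ * C.b₀ :=
        mul_le_mul_of_nonneg_left hfb (pow_nonneg (zero_le_one.trans hf.one_lt_deriv_zero.le) _)
    _ ≤ C.r := C.pow_mul_b₀_le

/-- Each of the three blocks of `0`s changes the displacement `f w - w` by at most its
derivative: near `1` the displacement is comparable to the distance to `1`, that is to the image
under the flip, and near `0` it is comparable to the point itself. -/
lemma θ_le_deriv_returnMap (hf : IsConcaveNorthSouth f) (C : ReturnConstants f γ) (hγ : γ ≤ 1)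
    {x : ℝ} {n k m : ℕ} (hb : 0 < b) (hx : x ∈ Ioo (0 : ℝ) 1) (hxb : x ≤ deriv f 0 ^ 3 * b)
    (h₁ : 1 - C.r ≤ f^[n] x) (h₂ : 1 - C.r ≤ f^[k] (affineFlip γ (f^[n] x)))
    (h₃ : b ≤ returnMap f γ n k m x) (h₄ : returnMap f γ n k m x ≤ C.r) :
    C.θ ≤ deriv (returnMap f γ n k m) x := by
  have hγ' : γ ∈ Ioc (0 : ℝ) 1 := ⟨C.γ_pos, hγ⟩
  set y := affineFlip γ (f^[n] x) with hy_def
  set z := affineFlip γ (f^[k] y) with hz_def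
  have hy : y ∈ Ioo (0 : ℝ) 1 := affineFlip_mem_Ioo hγ' (hf.iterate_mem_Ioo hx n)
  have hz : z ∈ Ioo (0 : ℝ) 1 := affineFlip_mem_Ioo hγ' (hf.iterate_mem_Ioo hy k)
  have hr : 0 ≤ 1 - C.r := sub_nonneg.2 C.r_le_one
  have near_one : ∀ (w : ℝ) (j : ℕ), w ∈ Ioo (0 : ℝ) 1 → 1 - C.r ≤ f^[j] w →
      (1 - deriv f (1 - C.r)) * affineFlip γ (f^[j] w) ≤
        γ * (deriv f^[j] w * ((deriv f 0 - 1) * w)) := fun w j hw hj => by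
    have := (hf.mul_one_sub_le_sub_self hr hj (hf.iterate_mem_Ioo hw j).2.le).trans
      (hf.sub_self_iterate_le_mul (Ioo_subset_Icc_self hw) j)
    calc _ = γ * ((1 - deriv f (1 - C.r)) * (1 - f^[j] w)) := by unfold affineFlip; ring
      _ ≤ _ := mul_le_mul_of_nonneg_left this hγ'.1.le
  have near_zero : (deriv f C.r - 1) * b ≤ deriv f^[m] z * ((deriv f 0 - 1) * z) :=
    (mul_le_mul_of_nonneg_left h₃ (sub_nonneg.2 C.one_lt_deriv.le)).trans
      ((hf.mul_le_sub_self (hb.le.trans h₃) h₄ C.r_le_one).trans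
        (hf.sub_self_iterate_le_mul (Ioo_subset_Icc_self hz) m))
  have hK : 0 < (deriv f 0 - 1) ^ 3 * deriv f 0 ^ 3 := by
    have := hf.one_lt_deriv_zero; positivity
  rw [hf.deriv_returnMap, ← mul_le_mul_iff_left₀ hK, C.θ_mul_eq hf]
  refine sq_mul_le_of_gap_bounds hf.one_lt_deriv_zero hγ'.1 C.deriv_one_sub_lt_one
    C.one_lt_deriv hb hy.1 hz.1 hxb ?_ (near_one x n hx h₁) (near_one y k hy h₂) near_zero
  exact mul_nonneg (mul_nonneg (hf.deriv_iterate_nonneg (Ioo_subset_Icc_self hz) m)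
    (hf.deriv_iterate_nonneg (Ioo_subset_Icc_self hy) k))
    (hf.deriv_iterate_nonneg (Ioo_subset_Icc_self hx) n)

/-- The orbits of `s < t` climb towards `1` together (`n`), are flipped and climb again with
the order reversed (`k`), and after the second flip climb out of `[0, b]` (`m`), still within
`[0, r]`. -/
lemma exists_returnMap (hf : IsConcaveNorthSouth f) (C : ReturnConstants f γ) (hγ : γ ≤ 1)
    (hb : b ∈ Ioo (0 : ℝ) 1) (hbC : f^[3] b ≤ C.b₀) (hs : b < s) (hst : s ≤ t)
    (ht : t ≤ f^[3] b) :
    ∃ n k m, 1 - C.r ≤ f^[n] s ∧ 1 - C.r ≤ f^[k] (affineFlip γ (f^[n] t)) ∧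
      b < returnMap f γ n k m s ∧ returnMap f γ n k m s ≤ f b ∧ returnMap f γ n k m t ≤ C.r := by
  have hγ' : γ ∈ Ioc (0 : ℝ) 1 := ⟨C.γ_pos, hγ⟩
  have hb01 := Ioo_subset_Icc_self hb
  have hbC' : b ≤ C.b₀ := (hf.monotone_iterate_apply hb01 (Nat.zero_le 3)).trans hbC
  have hs01 : s ∈ Ioo (0 : ℝ) 1 :=
    ⟨hb.1.trans hs, (hst.trans ht).trans_lt (hbC.trans_lt C.b₀_lt_one)⟩
  have ht01 : t ∈ Ioo (0 : ℝ) 1 := ⟨hs01.1.trans_le hst, (ht.trans hbC).trans_lt C.b₀_lt_one⟩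
  have hts : t ≤ f^[3] s :=
    ht.trans (hf.monotoneOn_iterate 3 hb01 (Ioo_subset_Icc_self hs01) hs.le)
  obtain ⟨n, hn, hys, hyt⟩ :=
    hf.exists_climb C hb.1 hbC' hs01 ((hst.trans ht).trans hbC) hst hts
  set ys := affineFlip γ (f^[n] s)
  set yt := affineFlip γ (f^[n] t)
  have hyt01 : yt ∈ Ioo (0 : ℝ) 1 := affineFlip_mem_Ioo hγ' (hf.iterate_mem_Ioo ht01 n)
  have hyy : yt ≤ ys := antitone_affineFlip hγ'.1.le
    (hf.monotoneOn_iterate n (Ioo_subset_Icc_self hs01) (Ioo_subset_Icc_self ht01) hst)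
  have hcatch : ys ≤ f^[C.J₁] yt := by
    rw [show 3 + 1 = 4 from rfl] at hyt
    refine hf.le_iterate_of_le_pow_mul C.r_le_one (hys.le.trans (hbC'.trans (C.b₀_le_r hγ)))
      (Ioo_subset_Icc_self hyt01) ?_
    have := mul_le_mul_of_nonneg_left hyt (pow_nonneg (zero_le_one.trans C.one_lt_deriv.le) C.J₁)
    nlinarith [mul_le_mul_of_nonneg_right C.one_le_pow_J₁ hb.1.le]
  obtain ⟨k, hk, hzt, hzs⟩ :=
    hf.exists_climb C hb.1 hbC' hyt01 ((hyy.trans hys.le).trans hbC') hyy hcatch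
  have hzz : affineFlip γ (f^[k] ys) ≤ affineFlip γ (f^[k] yt) := antitone_affineFlip hγ'.1.le
    (hf.monotoneOn_iterate k (Ioo_subset_Icc_self hyt01)
      ⟨hyt01.1.le.trans hyy, hys.le.trans hb.2.le⟩ hyy)
  obtain ⟨m, hm, hm', hmt⟩ := hf.exists_land C hγ hb
    ((hf.monotone_iterate_apply hb01 (by norm_num : 1 ≤ 3)).trans hbC) hzs hzz hzt
  exact ⟨n, k, m, hn, hk, hm, hm', hmt⟩

theorem exists_expanding_return (hf : IsConcaveNorthSouth f) (C : ReturnConstants f γ)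
    (hγ : γ ≤ 1) (hb : b ∈ Ioo (0 : ℝ) 1) (hbC : f^[3] b ≤ C.b₀) (hs : b < s) (hst : s < t)
    (ht : t ≤ f^[3] b) :
    ∃ F ∈ range (wordComp ![f, affineFlip γ]), ExpandingOn C.θ F (Icc s t) ∧ b < F s ∧
      F s ≤ f b := by
  obtain ⟨n, k, m, hn, hk, hFs, hFs', hFt⟩ := hf.exists_returnMap C hγ hb hbC hs hst.le ht
  refine ⟨_, returnMap_mem_range f γ n k m, fun x hx => ⟨hf.differentiable_returnMap n k m x, ?_⟩,
    hFs, hFs'⟩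
  have ht1 : t < 1 := (ht.trans hbC).trans_lt C.b₀_lt_one
  have hx01 : x ∈ Ioo (0 : ℝ) 1 := ⟨(hb.1.trans hs).trans_le hx.1, hx.2.trans_lt ht1⟩
  have hs01 : s ∈ Icc (0 : ℝ) 1 := ⟨(hb.1.trans hs).le, (hst.trans ht1).le⟩
  have ht01 : t ∈ Ioo (0 : ℝ) 1 := ⟨hs01.1.trans_lt hst, ht1⟩
  have hflip : ∀ w ∈ Ioo (0 : ℝ) 1, affineFlip γ (f^[n] w) ∈ Icc (0 : ℝ) 1 := fun w hw =>
    Ioo_subset_Icc_self (affineFlip_mem_Ioo ⟨C.γ_pos, hγ⟩ (hf.iterate_mem_Ioo hw n))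
  have hmono := hf.monotoneOn_returnMap ⟨C.γ_pos.le, hγ⟩ n k m
  refine hf.θ_le_deriv_returnMap C hγ hb.1 hx01
    (hx.2.trans (ht.trans (hf.iterate_le_pow_mul (Ioo_subset_Icc_self hb) 3)))
    (hn.trans (hf.monotoneOn_iterate n hs01 (Ioo_subset_Icc_self hx01) hx.1))
    (hk.trans (hf.monotoneOn_iterate k (hflip t ht01) (hflip x hx01)
      (antitone_affineFlip C.γ_pos.le
        (hf.monotoneOn_iterate n (Ioo_subset_Icc_self hx01) (Ioo_subset_Icc_self ht01) hx.2))))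
    (hFs.le.trans (hmono hs01 (Ioo_subset_Icc_self hx01) hx.1))
    ((hmono (Ioo_subset_Icc_self hx01) (Ioo_subset_Icc_self ht01) hx.2).trans hFt)

theorem exists_expanding_word (hf : IsConcaveNorthSouth f) (C : ReturnConstants f γ)
    (hγ : γ ≤ 1) (hb : b ∈ Ioo (0 : ℝ) 1) (hbC : f^[3] b ≤ C.b₀) {u v : ℝ} (hu : b < u)
    (huv : u < v) (hv : v ≤ f^[3] b) :
    ∃ w, ExpandingOn C.θ (wordComp ![f, affineFlip γ] w) (Icc u v) ∧
      wordComp ![f, affineFlip γ] w u ≤ f b ∧ f^[3] b ≤ wordComp ![f, affineFlip γ] w v := by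
  obtain ⟨_, ⟨w, rfl⟩, hw⟩ := exists_expandingOn_of_step
    (fun _ hF _ hG => comp_mem_range_wordComp _ hF hG) (C.one_lt_θ hf)
    (fun _ _ hs hst ht => hf.exists_expanding_return C hγ hb hbC hs hst ht) hu huv hv
  exact ⟨w, hw⟩

end IsConcaveNorthSouth

/-- expanding return words. -/
theorem stmt8 (f₀ f₁ : ℝ → ℝ) (β₀ lam₀ γ : ℝ)
    (h0 : F0cond f₀ β₀ lam₀) (h1 : F1cond f₁ γ lam₀)
    (h01 : F01cond f₀ β₀ lam₀ γ) :
    ∃ b₀ ∈ Set.Ioo (0:ℝ) 1, ∀ b ∈ Set.Ioc (0:ℝ) b₀,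
      ∀ b₂ ∈ Set.Icc (0:ℝ) 1, f₀ (f₀ b₂) = b →
      ∀ u v : ℝ, u < v → Set.Icc u v ⊆ Set.Icc b₂ b →
      ∃ w : List (Fin 2), ∃ q ∈ Set.Icc u v,
        wordComp ![f₀, f₁] w q = q ∧
        1 < deriv (wordComp ![f₀, f₁] w) q ∧
        (∀ x ∈ Set.Icc u v, wordComp ![f₀, f₁] w x = x → x = q) ∧
        ∀ ε > (0:ℝ), Set.Icc b₂ b ⊆
          ⋃ n : ℕ, (wordComp ![f₀, f₁] w)^[n] ''
            (Set.Icc (q - ε) (q + ε) ∩ Set.Icc 0 1) := by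
  obtain ⟨hC1, -, -, hf0, hf1, hlt, rfl, hβ, rfl, hlam0, hlam1, -⟩ := h0
  obtain ⟨hf₁, hlamγ, hγ1⟩ := h1
  obtain rfl : f₁ = affineFlip γ := funext hf₁
  have hf : IsConcaveNorthSouth f₀ := ⟨hC1, hf0, hf1, hlt, h01.1, hlam0, hβ⟩
  have hγ : γ ∈ Ioc (0 : ℝ) 1 := ⟨hlam0.trans_le hlamγ, hγ1.le⟩
  obtain ⟨C⟩ := hf.nonempty_returnConstants hγ
    (sub_one_sq_mul_pow_lt hlam0 hlam1 hγ.1 hγ1 hβ h01.2)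
  have hθ := C.one_lt_θ hf
  refine ⟨C.b₀, ⟨C.b₀_pos, C.b₀_lt_one⟩, fun b hb b₂ hb₂ hb₂b u v huv huvb => ?_⟩
  have hb₂' : b₂ ∈ Ioo (0 : ℝ) 1 := by
    refine ⟨hb₂.1.lt_of_ne ?_, hb₂.2.lt_of_ne ?_⟩ <;> rintro rfl <;>
      simp only [hf0, hf1] at hb₂b <;> linarith [hb.1, hb.2, C.b₀_lt_one]
  obtain ⟨b₃, hb₃, rfl⟩ := hf.surjOn_Ioo hb₂'
  replace hb₂b : f₀^[3] b₃ = b := hb₂b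
  have hu := huvb (left_mem_Icc.2 huv.le)
  have hv := huvb (right_mem_Icc.2 huv.le)
  obtain ⟨w, hw, hwu, hwv⟩ := hf.exists_expanding_word C hγ.2 hb₃ (hb₂b ▸ hb.2)
    ((hf.lt_self b₃ hb₃).trans_le hu.1) huv (hb₂b ▸ hv.2)
  rw [hb₂b] at hwv
  obtain ⟨q, hq, hFq, huniq⟩ := hw.exists_fixedPt hθ huv.le (hwu.trans hu.1) (hv.2.trans hwv)
  refine ⟨w, q, hq, hFq, hθ.trans_le (hw q hq).2, huniq, fun ε hε => ?_⟩
  refine (Icc_subset_Icc hwu hwv).trans ((hw.Icc_subset_iUnion_iterate_image hθ hq hFq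
    (hwu.trans hu.1) (hv.2.trans hwv) hε).trans (iUnion_mono fun n => image_mono ?_))
  exact inter_subset_inter_right _
    (Icc_subset_Icc (hb₂.1.trans hu.1) (hv.2.trans (hb.2.trans C.b₀_lt_one.le)))

end
end

section
/- Assume (F0), (F1) and (F2), and assume f₀'(x) ≤ β⁺ and f₂'(x) ≤ β⁺ for all x∈[0,1]. Let (p₀,p₁,p₂) be a probability vector with p₁·log γ + (p₀+p₂)·log β⁺ < 0, and let ν be the (p₀,p₁,p₂)-Bernoulli measure on Σ₃. Then for ν-almost every ξ∈Σ₃ the fiber {x∈[0,1] : (ξ,x)∈Λ_G} consists of a single point, and there is exactly one G-invariant Borel probability measure μ with π⁎μ = ν. -/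
/-
For `ξ ∈ Σ₃` the fiber of `Λ_G` over `ξ` is `⋂ₙ f_{ξ₋₁} ∘ ⋯ ∘ f_{ξ₋ₙ} [0,1]`, a nested
intersection of sets of diameter at most `∏_{k ≤ n} L(ξ₋ₖ)`, where `L` gives Lipschitz constants
of the fiber maps (`β⁺` for `f₀`, `f₂` and `γ` for `f₁`). Since `p₁ log γ + (p₀ + p₂) log β⁺ < 0`,
some `t > 0` has `ρ := ∑ₐ pₐ Lₐᵗ < 1`, and by independence of the coordinates the `t`-th power of
the `n`-th product has mean `ρⁿ`. By Markov's inequality the diameters become arbitrarily small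
for `ν`-a.e. `ξ`, so the fiber is a single point `s ξ`, which depends measurably on `ξ` as the
limit of the points `Gⁿ(σ⁻ⁿξ, 0)`. The graph of `s` carries `ν` to a `G`-invariant lift.
Conversely, an invariant lift gives full mass to each `Gⁿ(Σ₃ × [0,1])` because `G` is injective,
hence to `Λ_G`, hence to the graph of `s`, so it is the push-forward of `ν` along the graph.
-/

open Set Filter MeasureTheory

noncomputable section

open scoped NNReal Topology

section InvariantGraph

lemma mapsTo_iInter_iterate_image {Z : Type*} (G : Z → Z) :
    MapsTo G (⋂ n : ℕ, G^[n] '' univ) (⋂ n : ℕ, G^[n] '' univ) := by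
  intro q hq
  refine mem_iInter.2 fun n => ?_
  obtain ⟨r, -, rfl⟩ := mem_iInter.1 hq n
  exact ⟨G r, trivial, Function.Commute.iterate_self G n r⟩

lemma antitone_iterate_image_univ {Z : Type*} (G : Z → Z) :
    Antitone fun n : ℕ => G^[n] '' univ :=
  antitone_nat_of_succ_le fun n => by
    rw [Function.iterate_succ, image_comp]
    exact image_mono (subset_univ _)

variable {Z : Type*} [MeasurableSpace Z]

lemma ae_mem_iInter_iterate_image {μ : Measure Z} {G : Z → Z} (hG : MeasurableEmbedding G)
    (hμ : μ.map G = μ) : ∀ᵐ q ∂μ, q ∈ ⋂ n : ℕ, G^[n] '' univ := by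
  refine (ae_all_iff.2 fun n => ?_).mono fun q hq => mem_iInter.2 hq
  have hGn : MeasurableEmbedding G^[n] := by
    induction n with
    | zero => exact MeasurableEmbedding.id
    | succ n ih => exact ih.comp hG
  have h := ae_map_mem_range G^[n] hGn.measurableSet_range μ
  rwa [(MeasurePreserving.iterate ⟨hG.measurable, hμ⟩ n).map_eq, ← image_univ] at h

variable {X Y : Type*} [MeasurableSpace X] [MeasurableSpace Y]

lemma eq_map_fst_map_graph {μ : Measure (X × Y)} {s : X → Y} (hs : Measurable s)
    (h : ∀ᵐ q ∂μ, q.2 = s q.1) : μ = (μ.map Prod.fst).map (fun x => (x, s x)) := by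
  have hgraph : Measurable fun x => (x, s x) := measurable_id.prodMk hs
  rw [Measure.map_map hgraph measurable_fst]
  conv_lhs => rw [← Measure.map_id (μ := μ)]
  exact Measure.map_congr (h.mono fun q hq => Prod.ext rfl hq)

lemma map_map_graph_of_ae_comp_eq {ν : Measure X} {G : X × Y → X × Y} {σ : X → X} {s : X → Y}
    (hG : Measurable G) (hσ : MeasurePreserving σ ν ν) (hs : Measurable s)
    (h : ∀ᵐ x ∂ν, G (x, s x) = (σ x, s (σ x))) :
    (ν.map fun x => (x, s x)).map G = ν.map fun x => (x, s x) := by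
  have hgraph : Measurable fun x => (x, s x) := measurable_id.prodMk hs
  calc (ν.map fun x => (x, s x)).map G = ν.map ((fun x => (x, s x)) ∘ σ) := by
        rw [Measure.map_map hG hgraph]
        exact Measure.map_congr h
    _ = ν.map fun x => (x, s x) := by rw [← Measure.map_map hgraph hσ.measurable, hσ.map_eq]

theorem existsUnique_invariant_of_ae_fiber_eq {ν : Measure X} [IsProbabilityMeasure ν]
    {G : X × Y → X × Y} {σ : X → X} {s : X → Y} (hG : MeasurableEmbedding G)
    (hGσ : ∀ q, (G q).1 = σ q.1) (hσ : MeasurePreserving σ ν ν) (hs : Measurable s)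
    (hfib : ∀ᵐ x ∂ν, ∀ y, (x, y) ∈ ⋂ n : ℕ, G^[n] '' univ ↔ y = s x) :
    ∃! μ : Measure (X × Y), IsProbabilityMeasure μ ∧ μ.map G = μ ∧ μ.map Prod.fst = ν := by
  have hgraph : Measurable fun x => (x, s x) := measurable_id.prodMk hs
  have hcomm : ∀ᵐ x ∂ν, G (x, s x) = (σ x, s (σ x)) := by
    filter_upwards [hfib, hσ.quasiMeasurePreserving.ae hfib] with x hx hσx
    have hmem := mapsTo_iInter_iterate_image G ((hx (s x)).2 rfl)
    rw [← Prod.mk.eta (p := G (x, s x)), hGσ] at hmem ⊢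
    rw [(hσx _).1 hmem]
  refine ⟨ν.map fun x => (x, s x), ⟨Measure.isProbabilityMeasure_map hgraph.aemeasurable,
    map_map_graph_of_ae_comp_eq hG.measurable hσ hs hcomm, ?_⟩, ?_⟩
  · rw [Measure.map_map measurable_fst hgraph]
    exact Measure.map_id
  rintro μ ⟨hμ, hμG, rfl⟩
  refine eq_map_fst_map_graph hs ?_
  filter_upwards [ae_mem_iInter_iterate_image hG hμG,
    ae_of_ae_map measurable_fst.aemeasurable hfib] with q hq hfq
  exact (hfq q.2).1 hq

end InvariantGraph

lemma ae_forall_exists_lt_of_tendsto_integral {Ω : Type*} [MeasurableSpace Ω] {μ : Measure Ω}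
    [IsFiniteMeasure μ] {F : ℕ → Ω → ℝ} (hF : ∀ n ω, 0 ≤ F n ω) (hint : ∀ n, Integrable (F n) μ)
    (hlim : Tendsto (fun n => ∫ ω, F n ω ∂μ) atTop (𝓝 0)) :
    ∀ᵐ ω ∂μ, ∀ ε > 0, ∃ n, F n ω < ε := by
  have hfreq : ∀ ε > 0, ∀ᵐ ω ∂μ, ∃ n, F n ω < ε := by
    intro ε hε
    rw [ae_iff]
    simp only [not_exists, not_lt]
    have hle : ∀ n, μ.real {ω | ∀ n, ε ≤ F n ω} ≤ (∫ ω, F n ω ∂μ) / ε := fun n => by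
      have hsub : {ω | ∀ n, ε ≤ F n ω} ⊆ {ω | ε ≤ F n ω} := fun ω hω => hω n
      rw [le_div_iff₀ hε, mul_comm]
      exact (mul_le_mul_of_nonneg_left (measureReal_mono hsub) hε.le).trans
        (mul_meas_ge_le_integral_of_nonneg (Eventually.of_forall (hF n)) (hint n) ε)
    have h0 := ge_of_tendsto (by simpa using hlim.div_const ε) (Eventually.of_forall hle)
    exact (measureReal_eq_zero_iff).1 (le_antisymm h0 measureReal_nonneg)
  filter_upwards [ae_all_iff.2 fun m : ℕ => hfreq (1 / (m + 1)) (by positivity)] with ω hω ε hε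
  obtain ⟨m, hm⟩ := exists_nat_one_div_lt hε
  obtain ⟨n, hn⟩ := hω m
  exact ⟨n, hn.trans hm⟩

lemma exists_pos_sum_mul_rpow_lt_one {ι : Type*} [Fintype ι] {p L : ι → ℝ} (hL : ∀ i, 0 < L i)
    (hp : ∑ i, p i = 1) (hneg : ∑ i, p i * Real.log (L i) < 0) :
    ∃ t : ℝ, 0 < t ∧ ∑ i, p i * L i ^ t < 1 := by
  set φ : ℝ → ℝ := fun t => ∑ i, p i * L i ^ t
  have hφ0 : φ 0 = 1 := by simp [φ, hp]
  have hφ' : HasDerivAt φ (∑ i, p i * Real.log (L i)) 0 := by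
    simpa [φ] using HasDerivAt.fun_sum fun i _ =>
      (Real.hasStrictDerivAt_const_rpow (hL i) 0).hasDerivAt.const_mul (p i)
  obtain ⟨t, hslope, ht⟩ := ((hφ'.hasDerivWithinAt.liminf_right_slope_le hneg).and_eventually
    self_mem_nhdsWithin).exists
  refine ⟨t, ht, ?_⟩
  rw [slope_def_field, hφ0, sub_zero, div_lt_iff₀ ht, zero_mul, sub_neg] at hslope
  exact hslope

namespace IsBernoulli

variable {p : Fin 3 → ℝ} {ν : Measure Sig3}

lemma map_eval_zero_singleton (hν : IsBernoulli p ν) (b : Fin 3) :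
    ν.map (fun ξ : Sig3 => ξ 0) {b} = ENNReal.ofReal (p b) := by
  have h := hν.2 {0} fun _ => b
  simp only [Finset.mem_singleton, forall_eq, Finset.prod_singleton] at h
  rw [Measure.map_apply (measurable_pi_apply 0) (measurableSet_singleton b)]
  exact h

lemma isProjectiveLimit (hν : IsBernoulli p ν) (hp : ∀ a, 0 ≤ p a) :
    IsProjectiveLimit ν (fun s => Measure.pi fun _ : s => ν.map (fun ξ => ξ 0)) := by
  classical
  have := hν.1
  intro s
  rw [Measure.ext_iff_singleton]
  intro x
  rw [Measure.map_apply (Finset.measurable_restrict s) (measurableSet_singleton x),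
    Measure.pi_singleton]
  have hcyl : s.restrict ⁻¹' ({x} : Set ((i : s) → Fin 3)) =
      {ξ : Sig3 | ∀ i ∈ s, ξ i = if h : i ∈ s then x ⟨i, h⟩ else 0} := by
    ext ξ
    simp only [Set.mem_preimage, Set.mem_singleton_iff, funext_iff, Subtype.forall,
      Finset.restrict, Set.mem_ofPred_eq]
    exact ⟨fun h i hi => by simp [hi, h i hi], fun h i hi => by simpa [hi] using h i hi⟩
  rw [hcyl, hν.2, ENNReal.ofReal_prod_of_nonneg fun i _ => hp _, ← Finset.prod_coe_sort]
  simp [hν.map_eval_zero_singleton]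

lemma eq_infinitePi (hν : IsBernoulli p ν) (hp : ∀ a, 0 ≤ p a)
    [IsProbabilityMeasure (ν.map fun ξ : Sig3 => ξ 0)] :
    Measure.infinitePi (fun _ : ℤ => ν.map (fun ξ => ξ 0)) = ν :=
  have := hν.1
  (Measure.isProjectiveLimit_infinitePi _).unique (hν.isProjectiveLimit hp)

lemma measurePreserving_shiftMap (hν : IsBernoulli p ν) (hp : ∀ a, 0 ≤ p a) :
    MeasurePreserving shiftMap ν ν := by
  have := hν.1
  have : IsProbabilityMeasure (ν.map fun ξ : Sig3 => ξ 0) :=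
    Measure.isProbabilityMeasure_map (measurable_pi_apply 0).aemeasurable
  refine ⟨measurable_pi_lambda _ fun i => measurable_pi_apply _, ?_⟩
  conv_lhs => rw [← hν.eq_infinitePi hp]
  exact (Measure.map_infinitePi_infinitePi_of_inj (add_left_injective 1)).trans
    (hν.eq_infinitePi hp)

lemma integrable_prod_comp_and_integral_eq (hν : IsBernoulli p ν) (hp : ∀ a, 0 ≤ p a)
    (g : Fin 3 → ℝ) {n : ℕ} {e : Fin n → ℤ} (he : Function.Injective e) :
    Integrable (fun ξ : Sig3 => ∏ k, g (ξ (e k))) ν ∧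
      ∫ ξ, ∏ k, g (ξ (e k)) ∂ν = (∑ a, p a * g a) ^ n := by
  have := hν.1
  have : IsProbabilityMeasure (ν.map fun ξ : Sig3 => ξ 0) :=
    Measure.isProbabilityMeasure_map (measurable_pi_apply 0).aemeasurable
  have hmap : ν.map (fun ξ k => ξ (e k)) = Measure.pi fun _ : Fin n => ν.map (fun ξ => ξ 0) := by
    conv_lhs => rw [← hν.eq_infinitePi hp]
    rw [Measure.map_infinitePi_infinitePi_of_inj he, Measure.infinitePi_eq_pi]
  have hmeas : Measurable (fun ξ : Sig3 => fun k => ξ (e k)) :=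
    measurable_pi_lambda _ fun k => measurable_pi_apply _
  have hint : Integrable (fun y : Fin n → Fin 3 => ∏ k, g (y k)) (ν.map (fun ξ k => ξ (e k))) :=
    Integrable.of_finite
  refine ⟨(integrable_map_measure hint.aestronglyMeasurable hmeas.aemeasurable).1 hint, ?_⟩
  rw [← integral_map hmeas.aemeasurable hint.aestronglyMeasurable, hmap,
    integral_fintype_prod_eq_prod, Finset.prod_const, Finset.card_univ, Fintype.card_fin,
    integral_fintype Integrable.of_finite]
  simp [measureReal_def, hν.map_eval_zero_singleton, hp]

end IsBernoulli

namespace StepSkewProduct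

variable {fs : Fin 3 → ℝ → ℝ}

lemma shiftMap_iterate_apply (ξ : Sig3) (n : ℕ) (i : ℤ) : shiftMap^[n] ξ i = ξ (i + n) := by
  induction n generalizing ξ with
  | zero => simp
  | succ n ih =>
    rw [Function.iterate_succ_apply, ih]
    simp only [shiftMap, Nat.cast_succ]
    ring_nf

lemma shiftMap_injective : Function.Injective shiftMap := fun ξ η h =>
  funext fun i => by simpa [shiftMap] using congrFun h (i - 1)

lemma fst_iterate_Gmap (n : ℕ) (q : XSp) : ((Gmap fs)^[n] q).1 = shiftMap^[n] q.1 := by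
  induction n generalizing q with
  | zero => rfl
  | succ n ih => rw [Function.iterate_succ_apply, Function.iterate_succ_apply, ih]; rfl

def pastLip (L : Fin 3 → ℝ≥0) (ξ : Sig3) (n : ℕ) : ℝ :=
  ∏ k ∈ Finset.range n, (L (ξ (-(k + 1))) : ℝ)

lemma dist_le_pastLip_of_mem_iterate_image {L : Fin 3 → ℝ≥0}
    (hlip : ∀ a, LipschitzOnWith (L a) (fs a) (Icc 0 1)) {n : ℕ} {ξ : Sig3} {y z : Icc (0:ℝ) 1}
    (hy : (ξ, y) ∈ (Gmap fs)^[n] '' univ) (hz : (ξ, z) ∈ (Gmap fs)^[n] '' univ) :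
    dist y z ≤ pastLip L ξ n := by
  induction n generalizing ξ y z with
  | zero => exact Real.dist_le_of_mem_Icc_01 y.2 z.2
  | succ n ih =>
    rw [Function.iterate_succ', image_comp] at hy hz
    obtain ⟨⟨η, y'⟩, hy', hGy⟩ := hy
    obtain ⟨⟨η', z'⟩, hz', hGz⟩ := hz
    obtain rfl : η = η' :=
      shiftMap_injective ((congrArg Prod.fst hGy).trans (congrArg Prod.fst hGz).symm)
    obtain rfl : shiftMap η = ξ := congrArg Prod.fst hGy
    have hy := congrArg Prod.snd hGy
    have hz := congrArg Prod.snd hGz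
    simp only [Gmap] at hy hz
    subst hy hz
    have hpast : pastLip L (shiftMap η) (n + 1) = L (η 0) * pastLip L η n := by
      simp only [pastLip, Finset.prod_range_succ', shiftMap]
      push_cast
      ring_nf
    calc dist (projIcc 0 1 zero_le_one (fs (η 0) y')) (projIcc 0 1 zero_le_one (fs (η 0) z'))
        ≤ dist (fs (η 0) y') (fs (η 0) z') := by
          rw [Subtype.dist_eq, Real.dist_eq, Real.dist_eq]; exact abs_projIcc_sub_projIcc _
      _ ≤ L (η 0) * dist y' z' := (hlip (η 0)).dist_le_mul _ y'.2 _ z'.2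
      _ ≤ L (η 0) * pastLip L η n := by gcongr; exact ih hy' hz'
      _ = pastLip L (shiftMap η) (n + 1) := hpast.symm

lemma continuous_Gmap (hc : ∀ a, ContinuousOn (fs a) (Icc 0 1)) : Continuous (Gmap fs) := by
  have hf : Continuous fun r : Fin 3 × Icc (0:ℝ) 1 => fs r.1 r.2 :=
    continuous_prod_of_discrete_left.2 fun a =>
      (hc a).comp_continuous continuous_subtype_val Subtype.prop
  have hg : Continuous fun q : XSp => fs (q.1 0) q.2 :=
    hf.comp (f := fun q : XSp => (q.1 0, q.2)) (by fun_prop)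
  exact (continuous_pi fun _ => (continuous_apply _).comp continuous_fst).prodMk
    (continuous_projIcc.comp hg)

lemma injective_Gmap (hm : ∀ a, MapsTo (fs a) (Icc 0 1) (Icc 0 1))
    (hinj : ∀ a, InjOn (fs a) (Icc 0 1)) : Function.Injective (Gmap fs) := by
  rintro ⟨ξ, x⟩ ⟨η, y⟩ h
  obtain rfl : ξ = η := shiftMap_injective (congrArg Prod.fst h)
  have h2 := congrArg (fun q : XSp => (q.2 : ℝ)) h
  simp only [Gmap, projIcc_of_mem _ (hm _ x.2), projIcc_of_mem _ (hm _ y.2)] at h2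
  rw [Subtype.ext (hinj _ x.2 y.2 h2)]

def fiberApprox (fs : Fin 3 → ℝ → ℝ) (n : ℕ) (ξ : Sig3) : Icc (0:ℝ) 1 :=
  ((Gmap fs)^[n] (fun i => ξ (i - n), ⟨0, left_mem_Icc.2 zero_le_one⟩)).2

lemma mk_fiberApprox_mem_iterate_image (n : ℕ) (ξ : Sig3) :
    (ξ, fiberApprox fs n ξ) ∈ (Gmap fs)^[n] '' univ := by
  refine ⟨_, trivial, Prod.ext ?_ rfl⟩
  rw [fst_iterate_Gmap]
  funext i
  simp [shiftMap_iterate_apply]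

lemma measurable_fiberApprox (hc : ∀ a, ContinuousOn (fs a) (Icc 0 1)) (n : ℕ) :
    Measurable (fiberApprox fs n) :=
  measurable_snd.comp (((continuous_Gmap hc).measurable.iterate n).comp
    ((measurable_pi_lambda _ fun _ => measurable_pi_apply _).prodMk measurable_const))

lemma isClosed_fiber_iterate_image (hc : ∀ a, ContinuousOn (fs a) (Icc 0 1)) (n : ℕ)
    (ξ : Sig3) : IsClosed {y : Icc (0:ℝ) 1 | (ξ, y) ∈ (Gmap fs)^[n] '' univ} :=
  (isCompact_univ.image ((continuous_Gmap hc).iterate n)).isClosed.preimage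
    (Continuous.prodMk_right ξ)

variable {L : Fin 3 → ℝ≥0} {ξ : Sig3}

lemma cauchySeq_fiberApprox (hlip : ∀ a, LipschitzOnWith (L a) (fs a) (Icc 0 1))
    (hξ : ∀ ε > 0, ∃ n, pastLip L ξ n < ε) : CauchySeq fun n => fiberApprox fs n ξ := by
  refine Metric.cauchySeq_iff'.2 fun ε hε => ?_
  obtain ⟨N, hN⟩ := hξ ε hε
  refine ⟨N, fun n hn => (dist_le_pastLip_of_mem_iterate_image hlip ?_
    (mk_fiberApprox_mem_iterate_image N ξ)).trans_lt hN⟩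
  exact antitone_iterate_image_univ _ hn (mk_fiberApprox_mem_iterate_image n ξ)

lemma mem_LamG_iff_of_tendsto (hlip : ∀ a, LipschitzOnWith (L a) (fs a) (Icc 0 1))
    (hξ : ∀ ε > 0, ∃ n, pastLip L ξ n < ε) {l : Icc (0:ℝ) 1}
    (hl : Tendsto (fun n => fiberApprox fs n ξ) atTop (𝓝 l)) (y : Icc (0:ℝ) 1) :
    (ξ, y) ∈ LamG fs ↔ y = l := by
  have hlmem : ∀ n, (ξ, l) ∈ (Gmap fs)^[n] '' univ := fun n =>
    (isClosed_fiber_iterate_image (fun a => (hlip a).continuousOn) n ξ).mem_of_tendsto hl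
      (eventually_atTop.2 ⟨n, fun m hm => antitone_iterate_image_univ _ hm
        (mk_fiberApprox_mem_iterate_image m ξ)⟩)
  simp only [LamG, mem_iInter]
  refine ⟨fun hy => eq_of_forall_dist_le fun ε hε => ?_, fun h n => h ▸ hlmem n⟩
  obtain ⟨n, hn⟩ := hξ ε hε
  exact (dist_le_pastLip_of_mem_iterate_image hlip (hy n) (hlmem n)).trans hn.le

lemma exists_measurable_ae_mem_LamG_iff (hlip : ∀ a, LipschitzOnWith (L a) (fs a) (Icc 0 1))
    {ν : Measure Sig3} (h : ∀ᵐ ξ ∂ν, ∀ ε > 0, ∃ n, pastLip L ξ n < ε) :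
    ∃ s : Sig3 → Icc (0:ℝ) 1, Measurable s ∧ ∀ᵐ ξ ∂ν, ∀ y, (ξ, y) ∈ LamG fs ↔ y = s ξ := by
  obtain ⟨s, hs, hlim⟩ := measurable_limit_of_tendsto_metrizable_ae
    (fun n => (measurable_fiberApprox (fun a => (hlip a).continuousOn) n).aemeasurable)
    (h.mono fun ξ hξ => cauchySeq_tendsto_of_complete (cauchySeq_fiberApprox hlip hξ))
  exact ⟨s, hs, (h.and hlim).mono fun ξ hξ => mem_LamG_iff_of_tendsto hlip hξ.1 hξ.2⟩

lemma ae_exists_pastLip_lt {p : Fin 3 → ℝ} {ν : Measure Sig3} (hν : IsBernoulli p ν)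
    (hp : ∀ a, 0 ≤ p a) {t : ℝ} (ht : 0 < t) (hρ : ∑ a, p a * (L a : ℝ) ^ t < 1) :
    ∀ᵐ ξ ∂ν, ∀ ε > 0, ∃ n, pastLip L ξ n < ε := by
  have := hν.1
  have hnonneg : ∀ n ξ, 0 ≤ pastLip L ξ n := fun n ξ => Finset.prod_nonneg fun _ _ => (L _).2
  have hpow : ∀ n ξ, pastLip L ξ n ^ t = ∏ k : Fin n, (L (ξ (-((k : ℕ) + 1))) : ℝ) ^ t :=
    fun n ξ => by
      rw [pastLip, ← Real.finsetProd_rpow (Finset.range n) (fun k => (L (ξ (-(k + 1))) : ℝ))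
        fun _ _ => (L _).2]
      exact (Fin.prod_univ_eq_prod_range (fun k => (L (ξ (-(k + 1))) : ℝ) ^ t) n).symm
  have hmean : ∀ n, Integrable (fun ξ => pastLip L ξ n ^ t) ν ∧
      ∫ ξ, pastLip L ξ n ^ t ∂ν = (∑ a, p a * (L a : ℝ) ^ t) ^ n := fun n => by
    simp only [hpow]
    exact hν.integrable_prod_comp_and_integral_eq hp (fun a => (L a : ℝ) ^ t)
      (e := fun k : Fin n => -((k : ℕ) + 1 : ℤ)) fun k k' h => by simpa [Fin.ext_iff] using h
  have hlim : Tendsto (fun n => ∫ ξ, pastLip L ξ n ^ t ∂ν) atTop (𝓝 0) := by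
    simp only [(hmean _).2]
    exact tendsto_pow_atTop_nhds_zero_of_lt_one
      (Finset.sum_nonneg fun a _ => mul_nonneg (hp a) (Real.rpow_nonneg (L a).2 t)) hρ
  have hae := ae_forall_exists_lt_of_tendsto_integral (F := fun n ξ => pastLip L ξ n ^ t)
    (fun n ξ => Real.rpow_nonneg (hnonneg n ξ) t) (fun n => (hmean n).1) hlim
  filter_upwards [hae] with ξ hξ ε hε
  obtain ⟨n, hn⟩ := hξ (ε ^ t) (Real.rpow_pos_of_pos hε t)
  exact ⟨n, (Real.rpow_lt_rpow_iff (hnonneg n ξ) hε.le ht).1 hn⟩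

theorem ae_fiber_LamG_eq_singleton_and_existsUnique {p : Fin 3 → ℝ} {ν : Measure Sig3}
    (hm : ∀ a, MapsTo (fs a) (Icc 0 1) (Icc 0 1)) (hinj : ∀ a, InjOn (fs a) (Icc 0 1))
    (hlip : ∀ a, LipschitzOnWith (L a) (fs a) (Icc 0 1)) (hL : ∀ a, 0 < L a)
    (hp : ∀ a, 0 ≤ p a) (hsum : ∑ a, p a = 1) (hneg : ∑ a, p a * Real.log (L a) < 0)
    (hν : IsBernoulli p ν) :
    (∀ᵐ ξ ∂ν, ∃ x : Icc (0:ℝ) 1, {y : Icc (0:ℝ) 1 | (ξ, y) ∈ LamG fs} = {x}) ∧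
      ∃! μ : Measure XSp, IsProbabilityMeasure μ ∧ μ.map (Gmap fs) = μ ∧
        μ.map Prod.fst = ν := by
  have := hν.1
  obtain ⟨t, ht, hρ⟩ := exists_pos_sum_mul_rpow_lt_one (fun a => NNReal.coe_pos.2 (hL a)) hsum hneg
  obtain ⟨s, hs, hfib⟩ :=
    exists_measurable_ae_mem_LamG_iff hlip (ae_exists_pastLip_lt hν hp ht hρ)
  refine ⟨hfib.mono fun ξ h => ⟨s ξ, Set.ext h⟩, ?_⟩
  exact existsUnique_invariant_of_ae_fiber_eq
    ((continuous_Gmap fun a => (hlip a).continuousOn).measurable.measurableEmbedding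
      (injective_Gmap hm hinj))
    (fun _ => rfl) (hν.measurePreserving_shiftMap hp) hs hfib

end StepSkewProduct

lemma lipschitzOnWith_toNNReal_of_abs_deriv_le {f : ℝ → ℝ} {s : Set ℝ} {C : ℝ} (hs : Convex ℝ s)
    (hf : Differentiable ℝ f) (hC : ∀ x ∈ s, |deriv f x| ≤ C) :
    LipschitzOnWith C.toNNReal f s :=
  hs.lipschitzOnWith_of_nnnorm_deriv_le (fun x _ => hf x) fun x hx => by
    rw [← NNReal.coe_le_coe, coe_nnnorm, Real.norm_eq_abs]
    exact (hC x hx).trans (Real.le_coe_toNNReal C)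

section AffineReflection

variable {γ : ℝ}

lemma mapsTo_const_mul_one_sub (hγ : 0 ≤ γ) (hγ1 : γ ≤ 1) :
    MapsTo (fun x : ℝ => γ * (1 - x)) (Icc 0 1) (Icc 0 1) := fun x hx =>
  ⟨mul_nonneg hγ (by linarith [hx.2]), by nlinarith [hx.1, hx.2]⟩

lemma injective_const_mul_one_sub (hγ : γ ≠ 0) : Function.Injective fun x : ℝ => γ * (1 - x) :=
  fun x y h => by simpa using mul_left_cancel₀ hγ h

lemma lipschitzWith_const_mul_one_sub (hγ : 0 ≤ γ) :
    LipschitzWith γ.toNNReal fun x : ℝ => γ * (1 - x) :=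
  LipschitzWith.of_dist_le_mul fun x y => by
    rw [Real.coe_toNNReal γ hγ, Real.dist_eq, Real.dist_eq, ← mul_sub, abs_mul, abs_of_nonneg hγ,
      abs_sub_comm]
    ring_nf
    rfl

end AffineReflection

/-- if the upper bound on the central exponent is negative then
`ν`-almost every fiber of `Λ_G` is a single point and the invariant lift is unique. -/
theorem stmt15 (f₀ f₁ f₂ : ℝ → ℝ) (β₀ lam₀ γ β₂ : ℝ)
    (h0 : F0cond f₀ β₀ lam₀) (h1 : F1cond f₁ γ lam₀) (h2 : F2cond f₂ β₂ lam₀)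
    (hd : ∀ x ∈ Set.Icc (0:ℝ) 1, deriv f₀ x ≤ max β₀ β₂ ∧ deriv f₂ x ≤ max β₀ β₂)
    (p₀ p₁ p₂ : ℝ) (hp0 : 0 ≤ p₀) (hp1 : 0 ≤ p₁) (hp2 : 0 ≤ p₂)
    (hsum : p₀ + p₁ + p₂ = 1)
    (hneg : p₁ * Real.log γ + (p₀ + p₂) * Real.log (max β₀ β₂) < 0)
    (ν : Measure Sig3) (hν : IsBernoulli ![p₀, p₁, p₂] ν) :
    (∀ᵐ ξ ∂ν, ∃ x : Set.Icc (0:ℝ) 1,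
        {y : Set.Icc (0:ℝ) 1 | (ξ, y) ∈ LamG ![f₀, f₁, f₂]} = {x}) ∧
    (∃! μ : Measure XSp, IsProbabilityMeasure μ ∧ μ.map (Gmap ![f₀, f₁, f₂]) = μ ∧
        μ.map Prod.fst = ν) := by
  obtain ⟨hC0, hm0, hmono0, -, -, -, -, hβ0, -, hlam0, -, hlow0⟩ := h0
  obtain ⟨hf1, hγlam, hγ1⟩ := h1
  obtain ⟨hC2, hm2, hmono2, -, -, -, hlow2, -⟩ := h2
  obtain rfl : f₁ = fun x => γ * (1 - x) := funext hf1
  have hβ : 0 < max β₀ β₂ := (zero_lt_one.trans hβ0).trans_le (le_max_left _ _)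
  have hγ : 0 < γ := hlam0.trans_le hγlam
  have habs : ∀ f : ℝ → ℝ, (∀ x ∈ Icc (0:ℝ) 1, lam₀ ≤ deriv f x) →
      (∀ x ∈ Icc (0:ℝ) 1, deriv f x ≤ max β₀ β₂) →
      ∀ x ∈ Icc (0:ℝ) 1, |deriv f x| ≤ max β₀ β₂ := fun f hlow hup x hx =>
    abs_le.2 ⟨by linarith [hlow x hx, hup x hx], hup x hx⟩
  refine StepSkewProduct.ae_fiber_LamG_eq_singleton_and_existsUnique
    (L := ![(max β₀ β₂).toNNReal, γ.toNNReal, (max β₀ β₂).toNNReal]) ?_ ?_ ?_ ?_ ?_ ?_ ?_ hν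
  · intro a
    fin_cases a
    exacts [hm0, mapsTo_const_mul_one_sub hγ.le hγ1.le, hm2]
  · intro a
    fin_cases a
    exacts [hmono0.injOn, (injective_const_mul_one_sub hγ.ne').injOn, hmono2.injOn]
  · intro a
    fin_cases a
    exacts [lipschitzOnWith_toNNReal_of_abs_deriv_le (convex_Icc 0 1)
        (hC0.differentiable one_ne_zero) (habs f₀ hlow0 fun x hx => (hd x hx).1),
      (lipschitzWith_const_mul_one_sub hγ.le).lipschitzOnWith,
      lipschitzOnWith_toNNReal_of_abs_deriv_le (convex_Icc 0 1)
        (hC2.differentiable one_ne_zero) (habs f₂ hlow2 fun x hx => (hd x hx).2)]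
  · intro a
    fin_cases a <;> simp [hβ, hγ]
  · intro a
    fin_cases a <;> assumption
  · simpa [Fin.sum_univ_three] using hsum
  · simp only [Fin.sum_univ_three, Fin.isValue, Matrix.cons_val_zero, Matrix.cons_val_one,
      Matrix.cons_val, Real.coe_toNNReal _ hβ.le, Real.coe_toNNReal _ hγ.le]
    linarith

end
end

section
/- Assume (F0), (F1) and (F2), and assume f₀'(x) ≤ β⁺ and f₂'(x) ≤ β⁺ for all x∈[0,1]. If γ·(β⁺)² < 1, then there is exactly one G-invariant Borel probability measure μ with π⁎μ equal to the (1/3,1/3,1/3)-Bernoulli measure on Σ₃, and this μ satisfies χ(μ) < 0. -/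
open Set Filter MeasureTheory

noncomputable section

/-!
The fibre maps are Lipschitz on `[0,1]` with constants `c = (β⁺, γ, β⁺)`, and `γ (β⁺)² < 1` says
exactly that `∫ log c < 0` for the uniform Bernoulli measure `ν`. By the strong law of large
numbers, for `ν`-a.e. `ξ` the compositions `f_{ξ₋₁} ∘ ⋯ ∘ f_{ξ₋ₙ}` contract `[0,1]` exponentially
fast, so their images shrink to a point `x(ξ)`. The graph of `ξ ↦ x(ξ)` is `G`-invariant, and
pushing `ν` onto it gives an invariant lift. Conversely, an invariant lift `μ` is its own image
under `Gⁿ`, hence is carried by the points lying within `c_{ξ₋₁} ⋯ c_{ξ₋ₙ}` of `x(ξ)` for every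
`n`, i.e. by the graph. Finally `χ(μ) ≤ ∫ log c < 0` because `|f_i'| ≤ c_i`.
-/

open Topology ProbabilityTheory
open scoped NNReal

theorem IsBernoulli.unique {p : Fin 3 → ℝ} {ν₁ ν₂ : Measure Sig3}
    (h₁ : IsBernoulli p ν₁) (h₂ : IsBernoulli p ν₂) : ν₁ = ν₂ := by
  have := h₁.1
  have := h₂.1
  refine IsProjectiveLimit.unique (P := fun J => ν₁.map J.restrict) (fun _ => rfl) fun J => ?_
  refine Measure.ext_of_singleton fun b => ?_
  have hcyl : J.restrict ⁻¹' ({b} : Set (J → Fin 3)) =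
      {ξ : Sig3 | ∀ i ∈ J, ξ i = if h : i ∈ J then b ⟨i, h⟩ else 0} := by
    ext ξ
    simp only [mem_preimage, mem_singleton_iff, funext_iff, Finset.restrict, Subtype.forall,
      mem_ofPred_eq]
    exact forall₂_congr fun i hi => by rw [dif_pos hi]
  dsimp only
  rw [Measure.map_apply (by fun_prop) (measurableSet_singleton b),
    Measure.map_apply (by fun_prop) (measurableSet_singleton b), hcyl, h₁.2, h₂.2]

theorem isBernoulli_infinitePi (P : Measure (Fin 3)) [IsProbabilityMeasure P] :
    IsBernoulli (fun a => P.real {a}) (Measure.infinitePi fun _ : ℤ => P) := by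
  refine ⟨inferInstance, fun s a => ?_⟩
  have : {ξ : Sig3 | ∀ i ∈ s, ξ i = a i} = Set.pi s fun i => {a i} := by ext; simp
  rw [this, Measure.infinitePi_pi _ fun _ _ => measurableSet_singleton _,
    ENNReal.ofReal_prod_of_nonneg fun _ _ => measureReal_nonneg]
  simp [measureReal_def]

theorem isBernoulli_uniformOfFintype :
    IsBernoulli (fun _ => (1 : ℝ) / 3)
      (Measure.infinitePi fun _ : ℤ => (PMF.uniformOfFintype (Fin 3)).toMeasure) := by
  convert isBernoulli_infinitePi (PMF.uniformOfFintype (Fin 3)).toMeasure using 2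
  simp [measureReal_def]

theorem map_shiftMap_infinitePi (P : Measure (Fin 3)) [IsProbabilityMeasure P] :
    (Measure.infinitePi fun _ : ℤ => P).map shiftMap = Measure.infinitePi fun _ : ℤ => P :=
  Measure.map_infinitePi_infinitePi_of_inj (add_left_injective 1)

theorem tendsto_prod_zero_of_tendsto_avg_log {u : ℕ → ℝ} (hu : ∀ j, 0 < u j) {m : ℝ}
    (hm : m < 0)
    (h : Tendsto (fun n : ℕ => (∑ j ∈ Finset.range n, Real.log (u j)) / n) atTop (𝓝 m)) :
    Tendsto (fun n => ∏ j ∈ Finset.range n, u j) atTop (𝓝 0) := by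
  have hsum : Tendsto (fun n : ℕ => ∑ j ∈ Finset.range n, Real.log (u j)) atTop atBot := by
    refine (tendsto_natCast_atTop_atTop.atTop_mul_neg hm h).congr' ?_
    filter_upwards [eventually_ne_atTop 0] with n hn
    field_simp
  have hprod : (fun n => ∏ j ∈ Finset.range n, u j) =
      fun n => Real.exp (∑ j ∈ Finset.range n, Real.log (u j)) := by
    funext n
    rw [Real.exp_sum]
    exact Finset.prod_congr rfl fun j _ => (Real.exp_log (hu j)).symm
  rw [hprod]
  exact Real.tendsto_exp_atBot.comp hsum

theorem ae_tendsto_avg_past_infinitePi {α : Type*} [MeasurableSpace α] (P : Measure α)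
    [IsProbabilityMeasure P] {g : α → ℝ} (hg : Measurable g) (hint : Integrable g P) :
    ∀ᵐ ξ ∂(Measure.infinitePi fun _ : ℤ => P),
      Tendsto (fun n : ℕ => (∑ j ∈ Finset.range n, g (ξ (-(j + 1)))) / n) atTop
        (𝓝 (∫ a, g a ∂P)) := by
  set ν := Measure.infinitePi fun _ : ℤ => P
  set X : ℕ → (ℤ → α) → ℝ := fun j ξ => g (ξ (-(j + 1)))
  have hlaw : ∀ j, IdentDistrib (X j) g ν P := fun j => by
    refine ⟨(hg.comp (measurable_pi_apply _)).aemeasurable, hg.aemeasurable, ?_⟩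
    rw [show X j = g ∘ fun ξ => ξ (-(j + 1)) from rfl, ← Measure.map_map hg (measurable_pi_apply _),
      Measure.infinitePi_map_eval]
  have hindep : iIndepFun X ν :=
    (iIndepFun_infinitePi (P := fun _ => P) (X := fun _ => g) fun _ => hg).precomp
      fun i j hij => by simpa using hij
  rw [← (hlaw 0).integral_eq]
  exact strong_law_ae_real X ((hlaw 0).integrable_iff.2 hint)
    (fun i j hij => hindep.indepFun hij) fun j => (hlaw j).trans (hlaw 0).symm

section PastComposition

variable (fs : Fin 3 → ℝ → ℝ) (c : Fin 3 → ℝ≥0)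

/-- `pastComp fs n ξ = f_{ξ₋₁} ∘ ⋯ ∘ f_{ξ₋ₙ}`. -/
def pastComp : ℕ → Sig3 → ℝ → ℝ
  | 0, _, x => x
  | n + 1, ξ, x => fs (ξ (-1)) (pastComp n (fun i => ξ (i - 1)) x)

def pastLip (n : ℕ) (ξ : Sig3) : ℝ := ∏ j ∈ Finset.range n, (c (ξ (-(j + 1))) : ℝ)

variable {fs c}

theorem pastComp_succ_shiftMap (n : ℕ) (ξ : Sig3) (x : ℝ) :
    pastComp fs (n + 1) (shiftMap ξ) x = fs (ξ 0) (pastComp fs n ξ x) := by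
  simp [pastComp, shiftMap]

theorem pastLip_succ (n : ℕ) (ξ : Sig3) :
    pastLip c (n + 1) ξ = c (ξ (-1)) * pastLip c n (fun i => ξ (i - 1)) := by
  rw [pastLip, Finset.prod_range_succ', mul_comm, pastLip]
  congr 2 with j

theorem pastComp_mem (hmaps : ∀ a, MapsTo (fs a) (Icc 0 1) (Icc 0 1)) (n : ℕ) (ξ : Sig3)
    {x : ℝ} (hx : x ∈ Icc 0 1) : pastComp fs n ξ x ∈ Icc 0 1 := by
  induction n generalizing ξ with
  | zero => exact hx
  | succ n ih => exact hmaps _ (ih _)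

theorem abs_pastComp_sub_le (hmaps : ∀ a, MapsTo (fs a) (Icc 0 1) (Icc 0 1))
    (hlip : ∀ a, LipschitzOnWith (c a) (fs a) (Icc 0 1)) {x y : ℝ} (hx : x ∈ Icc 0 1)
    (hy : y ∈ Icc 0 1) (n k : ℕ) (ξ : Sig3) :
    |pastComp fs (n + k) ξ x - pastComp fs n ξ y| ≤ pastLip c n ξ := by
  induction n generalizing ξ with
  | zero =>
    have hx' := pastComp_mem hmaps k ξ hx
    simp only [zero_add, pastLip, Finset.range_zero, Finset.prod_empty, pastComp]
    exact abs_sub_le_of_nonneg_of_le hx'.1 hx'.2 hy.1 hy.2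
  | succ n ih =>
    rw [Nat.add_right_comm, pastLip_succ]
    calc |pastComp fs (n + k + 1) ξ x - pastComp fs (n + 1) ξ y|
        ≤ c (ξ (-1)) * |pastComp fs (n + k) (fun i => ξ (i - 1)) x
            - pastComp fs n (fun i => ξ (i - 1)) y| := by
          simpa [Real.dist_eq, pastComp] using (hlip _).dist_le_mul _
            (pastComp_mem hmaps _ _ hx) _ (pastComp_mem hmaps _ _ hy)
      _ ≤ c (ξ (-1)) * pastLip c n (fun i => ξ (i - 1)) := by gcongr; exact ih _

theorem Gmap_snd (hmaps : ∀ a, MapsTo (fs a) (Icc 0 1) (Icc 0 1)) (q : XSp) :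
    ((Gmap fs q).2 : ℝ) = fs (q.1 0) q.2 :=
  congrArg Subtype.val (projIcc_of_mem zero_le_one (hmaps _ q.2.2))

theorem iterate_Gmap (hmaps : ∀ a, MapsTo (fs a) (Icc 0 1) (Icc 0 1)) (n : ℕ) (q : XSp) :
    ((Gmap fs)^[n] q).1 = shiftMap^[n] q.1 ∧
      (((Gmap fs)^[n] q).2 : ℝ) = pastComp fs n (shiftMap^[n] q.1) q.2 := by
  induction n with
  | zero => exact ⟨rfl, rfl⟩
  | succ n ih =>
    rw [Function.iterate_succ_apply', Function.iterate_succ_apply', Gmap_snd hmaps, ih.2, ih.1,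
      pastComp_succ_shiftMap]
    exact ⟨congrArg shiftMap ih.1, rfl⟩

end PastComposition

section InvariantGraph

variable {fs : Fin 3 → ℝ → ℝ} {c : Fin 3 → ℝ≥0}

variable (fs) in
/-- The `limsup` makes `invGraph fs` total and measurable; it is the limit of
`pastComp fs n ξ 0` wherever `pastLip c n ξ → 0`. -/
def invGraph (ξ : Sig3) : ℝ := limsup (fun n => pastComp fs n ξ 0) atTop

variable (fs) in
def graphMap (ξ : Sig3) : XSp := (ξ, projIcc 0 1 zero_le_one (invGraph fs ξ))

variable (hmaps : ∀ a, MapsTo (fs a) (Icc 0 1) (Icc 0 1))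
  (hlip : ∀ a, LipschitzOnWith (c a) (fs a) (Icc 0 1))
include hmaps hlip

theorem tendsto_pastComp_invGraph {ξ : Sig3} (hK : Tendsto (pastLip c · ξ) atTop (𝓝 0)) :
    Tendsto (fun n => pastComp fs n ξ 0) atTop (𝓝 (invGraph fs ξ)) := by
  have h0 : (0 : ℝ) ∈ Icc 0 1 := left_mem_Icc.2 zero_le_one
  have hcauchy : CauchySeq fun n => pastComp fs n ξ 0 := by
    refine cauchySeq_of_le_tendsto_0' _ (fun n m hnm => ?_) hK
    obtain ⟨k, rfl⟩ := Nat.exists_eq_add_of_le hnm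
    rw [Real.dist_eq, abs_sub_comm]
    exact abs_pastComp_sub_le hmaps hlip h0 h0 n k ξ
  obtain ⟨x, hx⟩ := cauchySeq_tendsto_of_complete hcauchy
  rwa [invGraph, hx.limsup_eq]

theorem invGraph_mem {ξ : Sig3} (hK : Tendsto (pastLip c · ξ) atTop (𝓝 0)) :
    invGraph fs ξ ∈ Icc 0 1 :=
  isClosed_Icc.mem_of_tendsto (tendsto_pastComp_invGraph hmaps hlip hK)
    (Eventually.of_forall fun n => pastComp_mem hmaps n ξ (left_mem_Icc.2 zero_le_one))

theorem Gmap_graphMap {ξ : Sig3} (hK : Tendsto (pastLip c · ξ) atTop (𝓝 0)) :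
    Gmap fs (graphMap fs ξ) = graphMap fs (shiftMap ξ) := by
  have hmem := invGraph_mem hmaps hlip hK
  have hshift : Tendsto (fun n => pastComp fs (n + 1) (shiftMap ξ) 0) atTop
      (𝓝 (fs (ξ 0) (invGraph fs ξ))) := by
    simp_rw [pastComp_succ_shiftMap]
    exact ((hlip (ξ 0)).continuousOn.continuousWithinAt hmem).tendsto.comp
      (tendsto_nhdsWithin_iff.2 ⟨tendsto_pastComp_invGraph hmaps hlip hK,
        Eventually.of_forall fun n => pastComp_mem hmaps n ξ (left_mem_Icc.2 zero_le_one)⟩)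
  have hinv : invGraph fs (shiftMap ξ) = fs (ξ 0) (invGraph fs ξ) :=
    ((tendsto_add_atTop_iff_nat 1).1 hshift).limsup_eq
  simp only [Gmap, graphMap, projIcc_of_mem zero_le_one hmem, hinv]

theorem graphMap_eq_of_abs_sub_pastComp_le {q : XSp}
    (hK : Tendsto (pastLip c · q.1) atTop (𝓝 0))
    (hq : ∀ n, |(q.2 : ℝ) - pastComp fs n q.1 0| ≤ pastLip c n q.1) :
    graphMap fs q.1 = q := by
  have hq2 : Tendsto (fun n => pastComp fs n q.1 0) atTop (𝓝 q.2) :=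
    tendsto_iff_norm_sub_tendsto_zero.2 <| squeeze_zero_norm (fun n => by
      rw [norm_norm, Real.norm_eq_abs, abs_sub_comm]; exact hq n) hK
  rw [graphMap, tendsto_nhds_unique (tendsto_pastComp_invGraph hmaps hlip hK) hq2,
    projIcc_val zero_le_one]

end InvariantGraph

theorem measurable_shiftMap : Measurable shiftMap :=
  measurable_pi_lambda _ fun i => measurable_pi_apply (i + 1)

theorem measurable_pastLip (c : Fin 3 → ℝ≥0) (n : ℕ) : Measurable (pastLip c n) :=
  Finset.measurable_prod _ fun _ _ =>
    (Measurable.of_discrete (f := fun a => (c a : ℝ))).comp (measurable_pi_apply _)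

theorem measurable_phiC (fs : Fin 3 → ℝ → ℝ) : Measurable (phiC fs) :=
  (measurable_from_prod_countable_right (f := fun p : Fin 3 × ℝ => Real.log |deriv (fs p.1) p.2|)
    fun a => (measurable_deriv (fs a)).abs.log).comp
    (f := fun q : XSp => (q.1 0, (q.2 : ℝ))) (by fun_prop)

section Measurability

variable {fs : Fin 3 → ℝ → ℝ} (hfs : ∀ a, Measurable (fs a))
include hfs

theorem measurable_uncurry_fs : Measurable fun p : Fin 3 × ℝ => fs p.1 p.2 :=
  measurable_from_prod_countable_right hfs

theorem measurable_pastComp (n : ℕ) (x : ℝ) : Measurable fun ξ => pastComp fs n ξ x := by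
  induction n with
  | zero => exact measurable_const
  | succ n ih =>
    have hprev : Measurable fun ξ : Sig3 => pastComp fs n (fun i => ξ (i - 1)) x :=
      ih.comp (measurable_pi_lambda _ fun i => measurable_pi_apply (i - 1))
    exact (measurable_uncurry_fs hfs).comp ((measurable_pi_apply (-1)).prodMk hprev)

theorem measurable_graphMap : Measurable (graphMap fs) :=
  measurable_id.prodMk <| continuous_projIcc.measurable.comp <|
    Measurable.limsup fun n => measurable_pastComp hfs n 0

theorem measurable_Gmap : Measurable (Gmap fs) :=
  (measurable_shiftMap.comp measurable_fst).prodMk <| continuous_projIcc.measurable.comp <|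
    (measurable_uncurry_fs hfs).comp (f := fun q : XSp => (q.1 0, (q.2 : ℝ))) (by fun_prop)

end Measurability

section InvariantLift

variable {fs : Fin 3 → ℝ → ℝ} {c : Fin 3 → ℝ≥0} {ν : Measure Sig3}
  (hfs : ∀ a, Measurable (fs a)) (hmaps : ∀ a, MapsTo (fs a) (Icc 0 1) (Icc 0 1))
  (hlip : ∀ a, LipschitzOnWith (c a) (fs a) (Icc 0 1))
  (hK : ∀ᵐ ξ ∂ν, Tendsto (pastLip c · ξ) atTop (𝓝 0))

include hfs in
theorem map_fst_map_graphMap : (ν.map (graphMap fs)).map Prod.fst = ν := by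
  rw [Measure.map_map measurable_fst (measurable_graphMap hfs)]
  exact Measure.map_id

include hfs hmaps hlip hK in
theorem map_Gmap_map_graphMap (hν : ν.map shiftMap = ν) :
    (ν.map (graphMap fs)).map (Gmap fs) = ν.map (graphMap fs) := by
  have hconj : Gmap fs ∘ graphMap fs =ᵐ[ν] graphMap fs ∘ shiftMap :=
    hK.mono fun ξ hξ => Gmap_graphMap hmaps hlip hξ
  rw [Measure.map_map (measurable_Gmap hfs) (measurable_graphMap hfs), Measure.map_congr hconj,
    ← Measure.map_map (measurable_graphMap hfs) measurable_shiftMap, hν]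

include hfs hmaps hlip hK in
theorem eq_map_graphMap {μ : Measure XSp} (hμ : μ.map (Gmap fs) = μ)
    (hμν : μ.map Prod.fst = ν) : μ = ν.map (graphMap fs) := by
  have hG := measurable_Gmap hfs
  have hiter : ∀ n, μ.map (Gmap fs)^[n] = μ := by
    intro n
    induction n with
    | zero => exact Measure.map_id
    | succ n ih => rw [Function.iterate_succ', ← Measure.map_map hG (hG.iterate n), ih, hμ]
  have hbound : ∀ n, ∀ᵐ q ∂μ, |(q.2 : ℝ) - pastComp fs n q.1 0| ≤ pastLip c n q.1 := by
    intro n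
    have hS : MeasurableSet {q : XSp | |(q.2 : ℝ) - pastComp fs n q.1 0| ≤ pastLip c n q.1} :=
      measurableSet_le ((measurable_subtype_coe.comp measurable_snd).sub
          ((measurable_pastComp hfs n 0).comp measurable_fst)).abs
        ((measurable_pastLip c n).comp measurable_fst)
    rw [← hiter n, ae_map_iff (hG.iterate n).aemeasurable hS]
    refine Eventually.of_forall fun q => ?_
    obtain ⟨h1, h2⟩ := iterate_Gmap hmaps n q
    rw [h2, h1]
    exact abs_pastComp_sub_le hmaps hlip q.2.2 (left_mem_Icc.2 zero_le_one) n 0 _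
  have hgraph : ∀ᵐ q ∂μ, graphMap fs q.1 = q := by
    rw [← hμν] at hK
    filter_upwards [ae_of_ae_map measurable_fst.aemeasurable hK, ae_all_iff.2 hbound]
      with q hq hqn
    exact graphMap_eq_of_abs_sub_pastComp_le hmaps hlip hq hqn
  calc μ = μ.map (graphMap fs ∘ Prod.fst) := by
        rw [Measure.map_congr (f := graphMap fs ∘ Prod.fst) (g := id) hgraph, Measure.map_id]
    _ = ν.map (graphMap fs) := by
      rw [← Measure.map_map (measurable_graphMap hfs) measurable_fst, hμν]

end InvariantLift

structure IsFiberMap (f : ℝ → ℝ) (lam C : ℝ) : Prop where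
  differentiable : Differentiable ℝ f
  mapsTo : MapsTo f (Icc 0 1) (Icc 0 1)
  le_abs_deriv : ∀ x ∈ Icc (0 : ℝ) 1, lam ≤ |deriv f x|
  abs_deriv_le : ∀ x ∈ Icc (0 : ℝ) 1, |deriv f x| ≤ C

theorem IsFiberMap.lipschitzOnWith {f : ℝ → ℝ} {lam : ℝ} {C : ℝ≥0} (hf : IsFiberMap f lam C) :
    LipschitzOnWith C f (Icc 0 1) :=
  (convex_Icc 0 1).lipschitzOnWith_of_nnnorm_deriv_le (fun x _ => hf.differentiable x)
    fun x hx => by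
      rw [← NNReal.coe_le_coe, coe_nnnorm]
      exact hf.abs_deriv_le x hx

theorem isFiberMap_of_contDiff {f : ℝ → ℝ} {lam C : ℝ} (hf : ContDiff ℝ 1 f)
    (hmaps : MapsTo f (Icc 0 1) (Icc 0 1)) (hlam : 0 < lam)
    (hderiv : ∀ x ∈ Icc (0 : ℝ) 1, lam ≤ deriv f x ∧ deriv f x ≤ C) : IsFiberMap f lam C where
  differentiable := hf.differentiable one_ne_zero
  mapsTo := hmaps
  le_abs_deriv x hx := by rw [abs_of_pos (hlam.trans_le (hderiv x hx).1)]; exact (hderiv x hx).1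
  abs_deriv_le x hx := by rw [abs_of_pos (hlam.trans_le (hderiv x hx).1)]; exact (hderiv x hx).2

theorem F1cond.isFiberMap {f₁ : ℝ → ℝ} {γ lam₀ : ℝ} (h1 : F1cond f₁ γ lam₀) (hγ : 0 < γ) :
    IsFiberMap f₁ lam₀ γ := by
  obtain ⟨hf₁, hγlam, hγ1⟩ := h1
  obtain rfl : f₁ = fun x => γ * (1 - x) := funext hf₁
  refine ⟨by fun_prop, fun x hx => ⟨by nlinarith [hx.2], by nlinarith [hx.1]⟩, fun x _ => ?_,
    fun x _ => ?_⟩ <;> simp [abs_of_pos hγ, hγlam]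

theorem chiOf_le_integral_log {fs : Fin 3 → ℝ → ℝ} {c : Fin 3 → ℝ≥0} {lam : ℝ} (hlam : 0 < lam)
    (hfib : ∀ a, IsFiberMap (fs a) lam (c a)) (μ : Measure XSp) [IsFiniteMeasure μ] :
    chiOf fs μ ≤ ∫ q, Real.log (c (q.1 0)) ∂μ := by
  have hbounds : ∀ q : XSp, Real.log lam ≤ phiC fs q ∧ phiC fs q ≤ Real.log (c (q.1 0)) :=
    fun q => have h := (hfib (q.1 0)).le_abs_deriv q.2 q.2.2
      ⟨Real.log_le_log hlam h,
        Real.log_le_log (hlam.trans_le h) ((hfib (q.1 0)).abs_deriv_le q.2 q.2.2)⟩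
  have hint : Integrable (phiC fs) μ := by
    refine .of_bound (measurable_phiC fs).aestronglyMeasurable
      (|Real.log lam| + ∑ a, |Real.log (c a)|) (Eventually.of_forall fun q => ?_)
    calc ‖phiC fs q‖ ≤ max |Real.log lam| |Real.log (c (q.1 0))| :=
          abs_le_max_abs_abs (hbounds q).1 (hbounds q).2
      _ ≤ |Real.log lam| + ∑ a, |Real.log (c a)| :=
          (max_le_add_of_nonneg (abs_nonneg _) (abs_nonneg _)).trans <| add_le_add_right
            (Finset.single_le_sum (fun a _ => abs_nonneg (Real.log (c a))) (Finset.mem_univ _)) _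
  have hint' : Integrable (fun q : XSp => Real.log (c (q.1 0))) μ :=
    (Integrable.of_finite (μ := μ.map fun q : XSp => q.1 0)
      (f := fun a => Real.log (c a))).comp_measurable (by fun_prop)
  exact integral_mono hint hint' fun q => (hbounds q).2

theorem ae_tendsto_pastLip_zero (P : Measure (Fin 3)) [IsProbabilityMeasure P]
    {c : Fin 3 → ℝ≥0} (hc : ∀ a, 0 < c a) (hneg : ∫ a, Real.log (c a) ∂P < 0) :
    ∀ᵐ ξ ∂(Measure.infinitePi fun _ : ℤ => P), Tendsto (pastLip c · ξ) atTop (𝓝 0) := by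
  filter_upwards [ae_tendsto_avg_past_infinitePi P (g := fun a => Real.log (c a))
    Measurable.of_discrete .of_finite] with ξ hξ
  exact tendsto_prod_zero_of_tendsto_avg_log (fun j => NNReal.coe_pos.2 (hc _)) hneg hξ

theorem exists_unique_invariant_lift_of_integral_log_neg {fs : Fin 3 → ℝ → ℝ}
    {c : Fin 3 → ℝ≥0} {lam : ℝ} (P : Measure (Fin 3)) [IsProbabilityMeasure P]
    (hlam : 0 < lam) (hfib : ∀ a, IsFiberMap (fs a) lam (c a))
    (hneg : ∫ a, Real.log (c a) ∂P < 0) :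
    ∃ μ : Measure XSp, (IsProbabilityMeasure μ ∧ μ.map (Gmap fs) = μ ∧
        μ.map Prod.fst = Measure.infinitePi (fun _ : ℤ => P)) ∧ chiOf fs μ < 0 ∧
      ∀ μ' : Measure XSp, μ'.map (Gmap fs) = μ' →
        μ'.map Prod.fst = Measure.infinitePi (fun _ : ℤ => P) → μ' = μ := by
  set ν := Measure.infinitePi fun _ : ℤ => P
  have hc : ∀ a, 0 < c a := fun a => NNReal.coe_pos.1 <| hlam.trans_le <|
    ((hfib a).le_abs_deriv 0 (left_mem_Icc.2 zero_le_one)).trans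
      ((hfib a).abs_deriv_le 0 (left_mem_Icc.2 zero_le_one))
  have hfs : ∀ a, Measurable (fs a) := fun a => (hfib a).differentiable.continuous.measurable
  have hmaps : ∀ a, MapsTo (fs a) (Icc 0 1) (Icc 0 1) := fun a => (hfib a).mapsTo
  have hlip : ∀ a, LipschitzOnWith (c a) (fs a) (Icc 0 1) := fun a => (hfib a).lipschitzOnWith
  have hK := ae_tendsto_pastLip_zero P hc hneg
  have hlaw : (ν.map (graphMap fs)).map (fun q => q.1 0) = P := by
    rw [Measure.map_map (by fun_prop) (measurable_graphMap hfs)]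
    exact Measure.infinitePi_map_eval _ 0
  refine ⟨ν.map (graphMap fs), ⟨Measure.isProbabilityMeasure_map
    (measurable_graphMap hfs).aemeasurable,
    map_Gmap_map_graphMap hfs hmaps hlip hK (map_shiftMap_infinitePi P),
    map_fst_map_graphMap hfs⟩, ?_, fun μ' hG hfst => eq_map_graphMap hfs hmaps hlip hK hG hfst⟩
  calc chiOf fs (ν.map (graphMap fs))
      ≤ ∫ q, Real.log (c (q.1 0)) ∂ν.map (graphMap fs) := chiOf_le_integral_log hlam hfib _
    _ = ∫ a, Real.log (c a) ∂P := by
      rw [← hlaw, integral_map (φ := fun q : XSp => q.1 0) (by fun_prop)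
        Measurable.of_discrete.aestronglyMeasurable]
    _ < 0 := hneg

theorem integral_log_uniformOfFintype_lt_zero {B γ : ℝ} (hB : 0 < B) (hγ0 : 0 < γ)
    (hγ : γ * B ^ 2 < 1) :
    ∫ a, Real.log (![B.toNNReal, γ.toNNReal, B.toNNReal] a : ℝ)
      ∂(PMF.uniformOfFintype (Fin 3)).toMeasure < 0 := by
  rw [PMF.integral_eq_sum, Fin.sum_univ_three]
  simp only [PMF.uniformOfFintype_apply, Fintype.card_fin, Matrix.cons_val, smul_eq_mul,
    Real.coe_toNNReal _ hB.le, Real.coe_toNNReal _ hγ0.le, ENNReal.toReal_inv,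
    ENNReal.toReal_natCast]
  have := Real.log_neg (by positivity) hγ
  rw [Real.log_mul hγ0.ne' (by positivity), Real.log_pow, Nat.cast_ofNat] at this
  linarith

/-- if `γ·(β⁺)² < 1` then the invariant lift of the `(1/3,1/3,1/3)`-Bernoulli
measure is unique and has negative central exponent. -/
theorem stmt16 (f₀ f₁ f₂ : ℝ → ℝ) (β₀ lam₀ γ β₂ : ℝ)
    (h0 : F0cond f₀ β₀ lam₀) (h1 : F1cond f₁ γ lam₀) (h2 : F2cond f₂ β₂ lam₀)
    (hd : ∀ x ∈ Set.Icc (0:ℝ) 1, deriv f₀ x ≤ max β₀ β₂ ∧ deriv f₂ x ≤ max β₀ β₂)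
    (hγ : γ * (max β₀ β₂) ^ 2 < 1) :
    ∃ μ : Measure XSp,
      (IsProbabilityMeasure μ ∧ μ.map (Gmap ![f₀, f₁, f₂]) = μ ∧
        IsBernoulli (fun _ => (1:ℝ)/3) (μ.map Prod.fst)) ∧
      chiOf ![f₀, f₁, f₂] μ < 0 ∧
      ∀ μ' : Measure XSp,
        (IsProbabilityMeasure μ' ∧ μ'.map (Gmap ![f₀, f₁, f₂]) = μ' ∧
          IsBernoulli (fun _ => (1:ℝ)/3) (μ'.map Prod.fst)) → μ' = μ := by
  obtain ⟨hf₀, hm₀, -, -, -, -, -, -, -, hlam, -, hd₀⟩ := h0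
  obtain ⟨hf₂, hm₂, -, -, -, -, hd₂, -⟩ := h2
  set B := max β₀ β₂
  have h00 : (0 : ℝ) ∈ Icc 0 1 := left_mem_Icc.2 zero_le_one
  have hγ0 : 0 < γ := hlam.trans_le h1.2.1
  have hB : 0 < B := hlam.trans_le ((hd₀ 0 h00).trans (hd 0 h00).1)
  let c : Fin 3 → ℝ≥0 := ![B.toNNReal, γ.toNNReal, B.toNNReal]
  have hfib : ∀ a, IsFiberMap (![f₀, f₁, f₂] a) lam₀ (c a) := by
    intro a
    fin_cases a <;> simp only [c, Fin.reduceFinMk, Matrix.cons_val, Real.coe_toNNReal _ hB.le,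
      Real.coe_toNNReal _ hγ0.le]
    exacts [isFiberMap_of_contDiff hf₀ hm₀ hlam fun x hx => ⟨hd₀ x hx, (hd x hx).1⟩,
      h1.isFiberMap hγ0, isFiberMap_of_contDiff hf₂ hm₂ hlam fun x hx => ⟨hd₂ x hx, (hd x hx).2⟩]
  obtain ⟨μ, ⟨hμ, hGμ, hfst⟩, hχ, huniq⟩ :=
    exists_unique_invariant_lift_of_integral_log_neg _ hlam hfib
      (integral_log_uniformOfFintype_lt_zero hB hγ0 hγ)
  exact ⟨μ, ⟨hμ, hGμ, hfst ▸ isBernoulli_uniformOfFintype⟩, hχ,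
    fun μ' ⟨_, hG', hB'⟩ => huniq μ' hG' (hB'.unique isBernoulli_uniformOfFintype)⟩

end
end
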